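/- arXiv:1105.3460 — 17 statements merged into one kernel-verified Lean document; each statement's English description precedes it below -/
import Mathlib

section
/- Let α : [a,b] → ℝ² be a regular curve and let h : [c,d] → [a,b] be a smooth function with h'(t) > 0 for all t and h(c) = a, h(d) = b. Then TS(α ∘ h)(t) = TS(α)(h(t)) for all t ∈ [c,d]; that is, the TreadmillSled is independent of orientation-preserving reparametrization. -/
/-- The TreadmillSled of a regular curve `α = (x, y)`:
`TS(α)(s) = (1/√(x'² + y'²)) · (−x'x − y'y, x y' − y x')`. -/
noncomputable def TS (α : ℝ → ℝ × ℝ) (s : ℝ) : ℝ × ℝ :=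
  (Real.sqrt ((deriv α s).1 ^ 2 + (deriv α s).2 ^ 2))⁻¹ •
    (-(deriv α s).1 * (α s).1 - (deriv α s).2 * (α s).2,
      (α s).1 * (deriv α s).2 - (α s).2 * (deriv α s).1)

/-- The TreadmillSled is invariant under orientation-preserving reparametrization:
if `h : [c,d] → [a,b]` is smooth with `h' > 0`, `h(c) = a`, `h(d) = b`, then
`TS(α ∘ h)(t) = TS(α)(h(t))` for all `t ∈ [c,d]`. -/
theorem stmt1 (a b c d : ℝ) (α : ℝ → ℝ × ℝ) (h : ℝ → ℝ)
    (hα : ContDiff ℝ (⊤ : ℕ∞) α)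
    (hreg : ∀ s ∈ Set.Icc a b, deriv α s ≠ 0)
    (hh : ContDiff ℝ (⊤ : ℕ∞) h)
    (hh' : ∀ t ∈ Set.Icc c d, 0 < deriv h t)
    (hhc : h c = a) (hhd : h d = b)
    (hmaps : Set.MapsTo h (Set.Icc c d) (Set.Icc a b)) :
    ∀ t ∈ Set.Icc c d, TS (α ∘ h) t = TS α (h t) := by
  intro t ht
  have hα' : HasDerivAt α (deriv α (h t)) (h t) :=
    (hα.differentiable (by simp) (h t)).hasDerivAt
  have hh'' : HasDerivAt h (deriv h t) t :=
    (hh.differentiable (by simp) t).hasDerivAt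
  have hcomp : HasDerivAt (α ∘ h) (deriv h t • deriv α (h t)) t :=
    hα'.scomp t hh''
  have hd : deriv (α ∘ h) t = deriv h t • deriv α (h t) := hcomp.deriv
  set k := deriv h t with hk
  have hkpos : 0 < k := hh' t ht
  have hkne : k ≠ 0 := ne_of_gt hkpos
  have hval : (α ∘ h) t = α (h t) := rfl
  unfold TS
  rw [hd, hval]
  have h1 : (k • deriv α (h t)).1 = k * (deriv α (h t)).1 := rfl
  have h2 : (k • deriv α (h t)).2 = k * (deriv α (h t)).2 := rfl
  rw [h1, h2]
  have hsqrt : Real.sqrt ((k * (deriv α (h t)).1) ^ 2 + (k * (deriv α (h t)).2) ^ 2)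
      = k * Real.sqrt ((deriv α (h t)).1 ^ 2 + (deriv α (h t)).2 ^ 2) := by
    rw [mul_pow, mul_pow, ← mul_add, Real.sqrt_mul (sq_nonneg k),
      Real.sqrt_sq hkpos.le]
  rw [hsqrt, mul_inv]
  set L := Real.sqrt ((deriv α (h t)).1 ^ 2 + (deriv α (h t)).2 ^ 2)
  have hkk : k * k⁻¹ = 1 := mul_inv_cancel₀ hkne
  apply Prod.ext <;> simp only [Prod.smul_fst, Prod.smul_snd, smul_eq_mul, mul_inv]
  · linear_combination (-(L⁻¹ * (deriv α (h t)).1 * (α (h t)).1)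
      - L⁻¹ * (deriv α (h t)).2 * (α (h t)).2) * hkk
  · linear_combination (L⁻¹ * (α (h t)).1 * (deriv α (h t)).2
      - L⁻¹ * (α (h t)).2 * (deriv α (h t)).1) * hkk
end

section
/- Let α : [a,b] → ℝ² be a regular curve and let τ ∈ ℝ. Then the curve β(s) = A(τ)·α(s) is regular and TS(β) = TS(α); that is, the TreadmillSled is invariant under rotations of the plane about the origin. -/
/-- Multiplication by the rotation matrix `A(τ)` with rows `(cos τ, sin τ)`, `(−sin τ, cos τ)`. -/
noncomputable def rotA (τ : ℝ) (p : ℝ × ℝ) : ℝ × ℝ :=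
  (Real.cos τ * p.1 + Real.sin τ * p.2, -Real.sin τ * p.1 + Real.cos τ * p.2)

/-- The TreadmillSled is invariant under rotations of the plane about the origin:
for a regular curve `α` on `[a,b]` and `τ ∈ ℝ`, the curve `β(s) = A(τ)·α(s)` is regular and
`TS(β) = TS(α)`. -/
theorem stmt2 (a b τ : ℝ) (α : ℝ → ℝ × ℝ)
    (hα : ContDiff ℝ (⊤ : ℕ∞) α)
    (hreg : ∀ s ∈ Set.Icc a b, deriv α s ≠ 0) :
    ∀ s ∈ Set.Icc a b,
      deriv (fun t => rotA τ (α t)) s ≠ 0 ∧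
      TS (fun t => rotA τ (α t)) s = TS α s := by
  intro s hs
  have hdiff : HasDerivAt α (deriv α s) s := (hα.differentiable (by simp) s).hasDerivAt
  set d := deriv α s with hd
  have hx : HasDerivAt (fun t => (α t).1) d.1 s :=
    (ContinuousLinearMap.fst ℝ ℝ ℝ).hasFDerivAt.comp_hasDerivAt s hdiff
  have hy : HasDerivAt (fun t => (α t).2) d.2 s :=
    (ContinuousLinearMap.snd ℝ ℝ ℝ).hasFDerivAt.comp_hasDerivAt s hdiff
  have h1 : HasDerivAt (fun t => Real.cos τ * (α t).1 + Real.sin τ * (α t).2)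
      (Real.cos τ * d.1 + Real.sin τ * d.2) s :=
    ((hx.const_mul _)).add ((hy.const_mul _))
  have h2 : HasDerivAt (fun t => -Real.sin τ * (α t).1 + Real.cos τ * (α t).2)
      (-Real.sin τ * d.1 + Real.cos τ * d.2) s :=
    ((hx.const_mul _)).add ((hy.const_mul _))
  have hβ : HasDerivAt (fun t => rotA τ (α t)) (rotA τ d) s := h1.prodMk h2
  have hder : deriv (fun t => rotA τ (α t)) s = rotA τ d := hβ.deriv
  have hsc : Real.sin τ ^ 2 + Real.cos τ ^ 2 = 1 := Real.sin_sq_add_cos_sq τ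
  have hdne : d ≠ 0 := hreg s hs
  constructor
  · rw [hder]
    intro h
    apply hdne
    have h1' : Real.cos τ * d.1 + Real.sin τ * d.2 = 0 := congrArg Prod.fst h
    have h2' : -Real.sin τ * d.1 + Real.cos τ * d.2 = 0 := congrArg Prod.snd h
    have e1 : d.1 = 0 := by nlinarith [sq_nonneg d.1, sq_nonneg d.2]
    have e2 : d.2 = 0 := by nlinarith [sq_nonneg d.1, sq_nonneg d.2]
    exact Prod.ext e1 e2
  · simp only [TS]
    rw [hder]
    simp only [rotA]
    have hnorm : (Real.cos τ * d.1 + Real.sin τ * d.2) ^ 2 +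
        (-Real.sin τ * d.1 + Real.cos τ * d.2) ^ 2 = d.1 ^ 2 + d.2 ^ 2 := by nlinarith
    rw [hnorm]
    congr 1
    refine Prod.ext ?_ ?_
    · show -(Real.cos τ * d.1 + Real.sin τ * d.2) *
          (Real.cos τ * (α s).1 + Real.sin τ * (α s).2) -
          (-Real.sin τ * d.1 + Real.cos τ * d.2) *
          (-Real.sin τ * (α s).1 + Real.cos τ * (α s).2) =
          -d.1 * (α s).1 - d.2 * (α s).2
      linear_combination (-(d.1 * (α s).1) - d.2 * (α s).2) * hsc
    · show (Real.cos τ * (α s).1 + Real.sin τ * (α s).2) *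
          (-Real.sin τ * d.1 + Real.cos τ * d.2) -
          (-Real.sin τ * (α s).1 + Real.cos τ * (α s).2) *
          (Real.cos τ * d.1 + Real.sin τ * d.2) =
          (α s).1 * d.2 - (α s).2 * d.1
      linear_combination ((α s).1 * d.2 - (α s).2 * d.1) * hsc
end

section
/- Let α₁ : [a,b] → ℝ² and α₂ : [a,b] → ℝ² be two smooth curves parametrized by arc-length. If TS(α₁)(s) = TS(α₂)(s) for all s ∈ [a,b], then there exists a constant τ ∈ ℝ such that α₂(s) = A(τ)·α₁(s) for all s ∈ [a,b]. -/
/-- The TreadmillSled of an arc-length parametrized curve `α = (x, y)`: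
`TS(α)(s) = (−x'x − y'y, x y' − y x')`. -/
noncomputable def TSa (α : ℝ → ℝ × ℝ) (s : ℝ) : ℝ × ℝ :=
  (-(deriv α s).1 * (α s).1 - (deriv α s).2 * (α s).2,
    (α s).1 * (deriv α s).2 - (α s).2 * (deriv α s).1)

/-- Auxiliary: view a plane curve as a complex-valued curve. -/
noncomputable def cx (α : ℝ → ℝ × ℝ) (s : ℝ) : ℂ :=
  ((α s).1 : ℂ) + ((α s).2 : ℂ) * Complex.I

lemma cx_re (α : ℝ → ℝ × ℝ) (s : ℝ) : (cx α s).re = (α s).1 := by simp [cx]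

lemma cx_im (α : ℝ → ℝ × ℝ) (s : ℝ) : (cx α s).im = (α s).2 := by simp [cx]

lemma cx_contDiff {α : ℝ → ℝ × ℝ} (h : ContDiff ℝ (⊤:ℕ∞) α) : ContDiff ℝ (⊤:ℕ∞) (cx α) := by
  have h1 : ContDiff ℝ (⊤:ℕ∞) (fun s => ((α s).1 : ℂ)) :=
    Complex.ofRealCLM.contDiff.comp (contDiff_fst.comp h)
  have h2 : ContDiff ℝ (⊤:ℕ∞) (fun s => ((α s).2 : ℂ)) :=
    Complex.ofRealCLM.contDiff.comp (contDiff_snd.comp h)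
  exact h1.add (h2.mul contDiff_const)

lemma cx_hasDerivAt {α : ℝ → ℝ × ℝ} (h : ContDiff ℝ (⊤:ℕ∞) α) (s : ℝ) :
    HasDerivAt (cx α) (cx (deriv α) s) s := by
  have hα : HasDerivAt α (deriv α s) s :=
    ((h.differentiable (by simp)) s).hasDerivAt
  have he : HasDerivAt (fun t => Complex.equivRealProdCLM.symm (α t))
      (Complex.equivRealProdCLM.symm (deriv α s)) s :=
    (Complex.equivRealProdCLM.symm.hasFDerivAt).comp_hasDerivAt s hα
  have hfun : (fun t => (Complex.equivRealProdCLM.symm (α t) : ℂ)) = cx α := by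
    funext t
    rw [Complex.equivRealProdCLM_symm_apply]
    rfl
  have hval : (Complex.equivRealProdCLM.symm (deriv α s) : ℂ) = cx (deriv α) s := by
    rw [Complex.equivRealProdCLM_symm_apply]
    rfl
  rw [hfun, hval] at he
  exact he

/-- If two arc-length parametrized smooth curves `α₁, α₂ : [a,b] → ℝ²` have the same
TreadmillSled, then `α₂ = A(τ)·α₁` for some constant `τ`. -/
theorem stmt3 (a b : ℝ) (hab : a ≤ b) (α₁ α₂ : ℝ → ℝ × ℝ)
    (h1 : ContDiff ℝ (⊤ : ℕ∞) α₁) (h2 : ContDiff ℝ (⊤ : ℕ∞) α₂)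
    (hu1 : ∀ s ∈ Set.Icc a b, (deriv α₁ s).1 ^ 2 + (deriv α₁ s).2 ^ 2 = 1)
    (hu2 : ∀ s ∈ Set.Icc a b, (deriv α₂ s).1 ^ 2 + (deriv α₂ s).2 ^ 2 = 1)
    (hTS : ∀ s ∈ Set.Icc a b, TSa α₁ s = TSa α₂ s) :
    ∃ τ : ℝ, ∀ s ∈ Set.Icc a b, α₂ s = rotA τ (α₁ s) := by
  classical
  have h1 : ContDiff ℝ (⊤:ℕ∞) α₁ := h1.of_le (by simp)
  have h2 : ContDiff ℝ (⊤:ℕ∞) α₂ := h2.of_le (by simp)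
  have hd1' : ContDiff ℝ (⊤:ℕ∞) (deriv α₁) := (contDiff_infty_iff_deriv.mp h1).2
  have hd2' : ContDiff ℝ (⊤:ℕ∞) (deriv α₂) := (contDiff_infty_iff_deriv.mp h2).2
  -- unit speed in complex form
  have hn1 : ∀ s ∈ Set.Icc a b,
      cx (deriv α₁) s * (starRingEnd ℂ) (cx (deriv α₁) s) = 1 := by
    intro s hs
    have hsq : Complex.normSq (cx (deriv α₁) s) = 1 := by
      rw [Complex.normSq_apply, cx_re, cx_im]
      nlinarith [hu1 s hs]
    rw [Complex.mul_conj, hsq, Complex.ofReal_one]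
  have hn2 : ∀ s ∈ Set.Icc a b,
      cx (deriv α₂) s * (starRingEnd ℂ) (cx (deriv α₂) s) = 1 := by
    intro s hs
    have hsq : Complex.normSq (cx (deriv α₂) s) = 1 := by
      rw [Complex.normSq_apply, cx_re, cx_im]
      nlinarith [hu2 s hs]
    rw [Complex.mul_conj, hsq, Complex.ofReal_one]
  -- TS relation in complex form
  have hTSc : ∀ s ∈ Set.Icc a b,
      (starRingEnd ℂ) (cx (deriv α₁) s) * cx α₁ s
        = (starRingEnd ℂ) (cx (deriv α₂) s) * cx α₂ s := by
    intro s hs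
    have h := hTS s hs
    have hfst := congrArg Prod.fst h
    have hsnd := congrArg Prod.snd h
    simp only [TSa] at hfst hsnd
    apply Complex.ext
    · simp only [Complex.mul_re, Complex.conj_re, Complex.conj_im, cx_re, cx_im]
      nlinarith [hfst]
    · simp only [Complex.mul_im, Complex.conj_re, Complex.conj_im, cx_re, cx_im]
      nlinarith [hsnd]
  -- the rotation function c
  set c : ℝ → ℂ :=
    fun t => cx (deriv α₂) t * (starRingEnd ℂ) (cx (deriv α₁) t) with hc_def
  have hconj1 : ContDiff ℝ (⊤:ℕ∞) (fun t => (starRingEnd ℂ) (cx (deriv α₁) t)) := by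
    have : ContDiff ℝ (⊤:ℕ∞) (fun t => Complex.conjCLE (cx (deriv α₁) t)) :=
      Complex.conjCLE.toContinuousLinearMap.contDiff.comp (cx_contDiff hd1')
    exact this
  have hcd : ContDiff ℝ (⊤:ℕ∞) c := (cx_contDiff hd2').mul hconj1
  -- z₂ = c * z₁ and w₂ = c * w₁ on [a,b]
  have step1 : ∀ s ∈ Set.Icc a b, cx α₂ s = c s * cx α₁ s := by
    intro s hs
    rw [hc_def]
    have h1' := hTSc s hs
    have h2' := hn2 s hs
    linear_combination -(cx (deriv α₂) s) * h1' - cx α₂ s * h2'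
  have step2 : ∀ s ∈ Set.Icc a b, cx (deriv α₂) s = c s * cx (deriv α₁) s := by
    intro s hs
    rw [hc_def]
    have h1' := hn1 s hs
    linear_combination -(cx (deriv α₂) s) * h1'
  -- derivative of c times z₁ vanishes
  have step3 : ∀ s ∈ Set.Ioo a b, deriv c s * cx α₁ s = 0 := by
    intro s hs
    have hc' : HasDerivAt c (deriv c s) s := ((hcd.differentiable (by simp)) s).hasDerivAt
    have H1 : HasDerivAt (fun t => c t * cx α₁ t)
        (deriv c s * cx α₁ s + c s * cx (deriv α₁) s) s :=
      hc'.mul (cx_hasDerivAt h1 s)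
    have hev : cx α₂ =ᶠ[nhds s] fun t => c t * cx α₁ t := by
      filter_upwards [Ioo_mem_nhds hs.1 hs.2] with t ht
      exact step1 t (Set.Ioo_subset_Icc_self ht)
    have H2 : HasDerivAt (cx α₂)
        (deriv c s * cx α₁ s + c s * cx (deriv α₁) s) s :=
      H1.congr_of_eventuallyEq hev
    have huniq := (cx_hasDerivAt h2 s).unique H2
    have hs2 := step2 s (Set.Ioo_subset_Icc_self hs)
    linear_combination hs2 - huniq
  -- hence deriv c = 0 on the open interval
  have hcderiv_cont : Continuous (deriv c) :=
    ((contDiff_infty_iff_deriv.mp hcd).2).continuous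
  have step4 : ∀ s ∈ Set.Ioo a b, deriv c s = 0 := by
    intro s hs
    by_contra hne
    set U : Set ℝ := Set.Ioo a b ∩ {t | deriv c t ≠ 0} with hU_def
    have hUopen : IsOpen U :=
      isOpen_Ioo.inter (isOpen_compl_singleton.preimage hcderiv_cont)
    have hsU : s ∈ U := ⟨hs, hne⟩
    have hz0 : ∀ t ∈ U, cx α₁ t = 0 := by
      intro t ht
      have := step3 t ht.1
      rcases mul_eq_zero.mp this with h | h
      · exact absurd h ht.2
      · exact h
    have hev : cx α₁ =ᶠ[nhds s] fun _ => (0 : ℂ) := by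
      filter_upwards [hUopen.mem_nhds hsU] with t ht
      exact hz0 t ht
    have H0 : HasDerivAt (cx α₁) 0 s :=
      (hasDerivAt_const s (0 : ℂ)).congr_of_eventuallyEq hev
    have hw0 : cx (deriv α₁) s = 0 := (cx_hasDerivAt h1 s).unique H0
    have := hn1 s (Set.Ioo_subset_Icc_self hs)
    rw [hw0] at this
    simp at this
  -- c is constant on [a,b]
  have step5 : ∀ s ∈ Set.Icc a b, c s = c a := by
    rcases eq_or_lt_of_le hab with heq | hlt
    · intro s hs
      have : s = a := le_antisymm (heq ▸ hs.2) hs.1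
      rw [this]
    · have hIcc0 : ∀ s ∈ Set.Icc a b, deriv c s = 0 := by
        have h0 : Set.EqOn (deriv c) (fun _ => (0 : ℂ)) (Set.Ioo a b) :=
          fun t ht => step4 t ht
        have hclo := h0.closure hcderiv_cont continuous_const
        rw [closure_Ioo hlt.ne] at hclo
        exact fun s hs => hclo hs
      exact constant_of_has_deriv_right_zero
        (hcd.continuous.continuousOn)
        (fun x hx => by
          have h0 : HasDerivAt c 0 x := by
            have := ((hcd.differentiable (by simp)) x).hasDerivAt
            rwa [hIcc0 x (Set.Ico_subset_Icc_self hx)] at this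
          exact h0.hasDerivWithinAt)
  -- |c a| = 1
  have haIcc : a ∈ Set.Icc a b := Set.left_mem_Icc.mpr hab
  have hmc : c a * (starRingEnd ℂ) (c a) = 1 := by
    have e1 := hn1 a haIcc
    have e2 := hn2 a haIcc
    have hprod : c a * (starRingEnd ℂ) (c a)
        = (cx (deriv α₂) a * (starRingEnd ℂ) (cx (deriv α₂) a))
          * (cx (deriv α₁) a * (starRingEnd ℂ) (cx (deriv α₁) a)) := by
      simp only [hc_def, map_mul, Complex.conj_conj]
      ring
    rw [hprod, e2, e1, one_mul]
  have hca_unit : Complex.normSq (c a) = 1 := by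
    have h' : ((Complex.normSq (c a) : ℝ) : ℂ) = 1 := by
      rw [← Complex.mul_conj]; exact hmc
    exact_mod_cast h'
  have habs : ‖c a‖ = 1 := by
    have h1' := Complex.sq_norm (c a)
    nlinarith [norm_nonneg (c a)]
  have hexp : Complex.exp ((Complex.arg (c a) : ℂ) * Complex.I) = c a := by
    have := Complex.norm_mul_exp_arg_mul_I (c a)
    rwa [habs, Complex.ofReal_one, one_mul] at this
  -- conclude
  refine ⟨-(Complex.arg (c a)), fun s hs => ?_⟩
  have hz : cx α₂ s = Complex.exp ((Complex.arg (c a) : ℂ) * Complex.I) * cx α₁ s := by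
    rw [hexp, ← step5 s hs]
    exact step1 s hs
  have hre := congrArg Complex.re hz
  have him := congrArg Complex.im hz
  simp only [Complex.mul_re, Complex.mul_im, cx_re, cx_im,
    Complex.exp_ofReal_mul_I_re, Complex.exp_ofReal_mul_I_im] at hre him
  have hrot : rotA (-(Complex.arg (c a))) (α₁ s)
      = (Real.cos (Complex.arg (c a)) * (α₁ s).1 - Real.sin (Complex.arg (c a)) * (α₁ s).2,
         Real.sin (Complex.arg (c a)) * (α₁ s).1 + Real.cos (Complex.arg (c a)) * (α₁ s).2) := by
    simp only [rotA, Real.cos_neg, Real.sin_neg, Prod.mk.injEq]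
    constructor <;> ring
  rw [hrot]
  exact Prod.ext hre (by rw [him]; ring)
end

section
/- Let α : [a,b] → ℝ² be a regular curve, let κ(t) = ⟨α''(t), J·α'(t)⟩ / |α'(t)|³ be its signed curvature, and let ρ₀ ∈ ℝ satisfy α'(a) = |α'(a)|·(cos ρ₀, sin ρ₀). Define ρ(t) = ρ₀ + ∫ₐᵗ κ(u)·|α'(u)| du. Then α'(t) = |α'(t)|·(cos ρ(t), sin ρ(t)) for all t ∈ [a,b]; that is, ρ is a continuous angle function for the unit tangent of α. -/
/-- For a regular curve `α : [a,b] → ℝ²` with signed curvature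
`κ = ⟨α'', J·α'⟩/|α'|³` (where `J` has rows `(0,−1)`, `(1,0)`), if `ρ₀` is an angle for the
unit tangent at `a` and `ρ(t) = ρ₀ + ∫ₐᵗ κ(u)·|α'(u)| du`, then
`α'(t) = |α'(t)|·(cos ρ(t), sin ρ(t))` for all `t ∈ [a,b]`; that is, `ρ` is a continuous
angle function for the unit tangent of `α`. -/
theorem stmt5 (a b : ℝ) (hab : a ≤ b) (α : ℝ → ℝ × ℝ) (κ ρ : ℝ → ℝ) (ρ₀ : ℝ)
    (hsmooth : ContDiff ℝ (⊤ : ℕ∞) α)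
    (hreg : ∀ t ∈ Set.Icc a b, deriv α t ≠ 0)
    (hκ : ∀ t, κ t = ((deriv (deriv α) t).2 * (deriv α t).1 -
        (deriv (deriv α) t).1 * (deriv α t).2) /
        (Real.sqrt ((deriv α t).1 ^ 2 + (deriv α t).2 ^ 2)) ^ 3)
    (hρ₀ : deriv α a = (Real.sqrt ((deriv α a).1 ^ 2 + (deriv α a).2 ^ 2)) •
        ((Real.cos ρ₀, Real.sin ρ₀) : ℝ × ℝ))
    (hρ : ∀ t, ρ t = ρ₀ + ∫ u in a..t,
        κ u * Real.sqrt ((deriv α u).1 ^ 2 + (deriv α u).2 ^ 2)) :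
    ∀ t ∈ Set.Icc a b, deriv α t =
      (Real.sqrt ((deriv α t).1 ^ 2 + (deriv α t).2 ^ 2)) •
        ((Real.cos (ρ t), Real.sin (ρ t)) : ℝ × ℝ) := by
  -- notation
  set v : ℝ → ℝ × ℝ := deriv α with hv_def
  set w : ℝ → ℝ × ℝ := deriv v with hw_def
  set nr : ℝ → ℝ := fun u => Real.sqrt ((v u).1 ^ 2 + (v u).2 ^ 2) with hnr_def
  set f : ℝ → ℝ := fun u => κ u * nr u with hf_def
  -- smoothness facts
  have hainf : ContDiff ℝ (⊤ : ℕ∞) α := hsmooth.of_le (by simp)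
  have hvC : ContDiff ℝ (⊤ : ℕ∞) v := (contDiff_infty_iff_deriv.mp hainf).2
  have hvdiff : Differentiable ℝ v := (contDiff_infty_iff_deriv.mp hvC).1
  have hwcont : Continuous w := (contDiff_infty_iff_deriv.mp hvC).2.continuous
  have hvcont : Continuous v := hvdiff.continuous
  have hv1cont : Continuous fun u => (v u).1 := hvcont.fst
  have hv2cont : Continuous fun u => (v u).2 := hvcont.snd
  have hnrcont : Continuous nr :=
    Real.continuous_sqrt.comp ((hv1cont.pow 2).add (hv2cont.pow 2))
  -- component derivatives
  have hd : ∀ u, HasDerivAt v (w u) u := fun u => (hvdiff u).hasDerivAt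
  have h1 : ∀ u, HasDerivAt (fun r => (v r).1) ((w u).1) u := fun u =>
    (ContinuousLinearMap.fst ℝ ℝ ℝ).hasFDerivAt.comp_hasDerivAt u (hd u)
  have h2 : ∀ u, HasDerivAt (fun r => (v r).2) ((w u).2) u := fun u =>
    (ContinuousLinearMap.snd ℝ ℝ ℝ).hasFDerivAt.comp_hasDerivAt u (hd u)
  -- positivity of speed on [a,b]
  have hs_pos : ∀ u ∈ Set.Icc a b, 0 < nr u := by
    intro u hu
    have h01 : (v u).1 ≠ 0 ∨ (v u).2 ≠ 0 := by
      by_contra h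
      push_neg at h
      exact hreg u hu (Prod.ext h.1 h.2)
    have : 0 < (v u).1 ^ 2 + (v u).2 ^ 2 := by
      rcases h01 with h | h
      · have := lt_of_le_of_ne (sq_nonneg (v u).1) (Ne.symm (pow_ne_zero 2 h))
        nlinarith [sq_nonneg (v u).2]
      · have := lt_of_le_of_ne (sq_nonneg (v u).2) (Ne.symm (pow_ne_zero 2 h))
        nlinarith [sq_nonneg (v u).1]
    exact Real.sqrt_pos.mpr this
  -- continuity of the integrand on [a,b]
  have hfcont : ContinuousOn f (Set.Icc a b) := by
    have hκeq : ∀ u, f u = ((w u).2 * (v u).1 - (w u).1 * (v u).2) / (nr u) ^ 3 * nr u := by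
      intro u; simp only [hf_def, hκ u]; rfl
    rw [show f = fun u => ((w u).2 * (v u).1 - (w u).1 * (v u).2) / (nr u) ^ 3 * nr u from
      funext hκeq]
    apply ContinuousOn.mul _ hnrcont.continuousOn
    apply ContinuousOn.div
    · exact ((hwcont.snd.mul hv1cont).sub (hwcont.fst.mul hv2cont)).continuousOn
    · exact (hnrcont.pow 3).continuousOn
    · intro u hu
      exact pow_ne_zero 3 (ne_of_gt (hs_pos u hu))
  have hfint : IntervalIntegrable f MeasureTheory.volume a b :=
    (hfcont.mono (by rw [Set.uIcc_of_le hab])).intervalIntegrable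
  -- derivative of ρ from the right
  have hρderiv : ∀ x ∈ Set.Ico a b, HasDerivWithinAt ρ (f x) (Set.Ici x) x := by
    intro x hx
    have hxI : x ∈ Set.Icc a b := ⟨hx.1, hx.2.le⟩
    have hmem : Set.Icc a b ∈ nhdsWithin x (Set.Ioi x) := by
      apply Filter.mem_of_superset (Ioo_mem_nhdsGT_of_mem ⟨le_refl x, hx.2⟩)
      intro y hy
      exact ⟨hx.1.trans hy.1.le, hy.2.le⟩
    have hmeas : StronglyMeasurableAtFilter f (nhdsWithin x (Set.Ioi x)) MeasureTheory.volume :=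
      ⟨Set.Icc a b, hmem, hfcont.aestronglyMeasurable measurableSet_Icc⟩
    have hcw : ContinuousWithinAt f (Set.Ioi x) x :=
      (hfcont x hxI).mono_of_mem_nhdsWithin hmem
    have hint : IntervalIntegrable f MeasureTheory.volume a x := by
      apply hfint.mono_set
      rw [Set.uIcc_of_le hx.1, Set.uIcc_of_le hab]
      exact Set.Icc_subset_Icc_right hx.2.le
    have H : HasDerivWithinAt (fun u => ρ₀ + ∫ r in a..u, f r) (f x) (Set.Ici x) x :=
      (intervalIntegral.integral_hasDerivWithinAt_right hint hmeas hcw).const_add ρ₀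
    exact H.congr (fun y _ => (hρ y)) (hρ x)
  -- continuity of ρ on [a,b]
  have hρcont : ContinuousOn ρ (Set.Icc a b) := by
    have hI : MeasureTheory.IntegrableOn f (Set.uIcc a b) MeasureTheory.volume := by
      rw [Set.uIcc_of_le hab]
      exact hfcont.integrableOn_compact isCompact_Icc
    have := (intervalIntegral.continuousOn_primitive_interval hI).const_smul (1 : ℝ)
    have H : ContinuousOn (fun u => ρ₀ + ∫ r in a..u, f r) (Set.Icc a b) := by
      rw [← Set.uIcc_of_le hab]
      exact continuousOn_const.add (intervalIntegral.continuousOn_primitive_interval hI)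
    exact H.congr (fun y _ => hρ y)
  -- the energy function
  set E : ℝ → ℝ := fun u =>
    ((v u).1 / nr u - Real.cos (ρ u)) ^ 2 + ((v u).2 / nr u - Real.sin (ρ u)) ^ 2 with hE_def
  have hEcont : ContinuousOn E (Set.Icc a b) := by
    apply ContinuousOn.add
    · exact (((hv1cont.continuousOn.div hnrcont.continuousOn fun u hu =>
        ne_of_gt (hs_pos u hu)).sub (Real.continuous_cos.comp_continuousOn hρcont)).pow 2)
    · exact (((hv2cont.continuousOn.div hnrcont.continuousOn fun u hu =>
        ne_of_gt (hs_pos u hu)).sub (Real.continuous_sin.comp_continuousOn hρcont)).pow 2)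
  have hEderiv : ∀ x ∈ Set.Ico a b, HasDerivWithinAt E 0 (Set.Ici x) x := by
    intro x hx
    have hxI : x ∈ Set.Icc a b := ⟨hx.1, hx.2.le⟩
    have hsx : 0 < nr x := hs_pos x hxI
    have hsne : nr x ≠ 0 := ne_of_gt hsx
    have hqpos : 0 < (v x).1 ^ 2 + (v x).2 ^ 2 := by
      have := Real.sqrt_pos.mp hsx; exact this
    have hqne : (v x).1 ^ 2 + (v x).2 ^ 2 ≠ 0 := ne_of_gt hqpos
    have hq : HasDerivAt (fun r => (v r).1 ^ 2 + (v r).2 ^ 2)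
        (2 * (v x).1 * (w x).1 + 2 * (v x).2 * (w x).2) x := by
      have := ((h1 x).pow 2).add ((h2 x).pow 2)
      refine this.congr_deriv ?_
      push_cast
      ring
    have hnr' : HasDerivAt nr
        ((2 * (v x).1 * (w x).1 + 2 * (v x).2 * (w x).2) / (2 * nr x)) x := hq.sqrt hqne
    have hρx : HasDerivWithinAt ρ (f x) (Set.Ici x) x := hρderiv x hx
    have hT1 : HasDerivWithinAt (fun u => (v u).1 / nr u)
        (((w x).1 * nr x - (v x).1 *
          ((2 * (v x).1 * (w x).1 + 2 * (v x).2 * (w x).2) / (2 * nr x))) / nr x ^ 2)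
        (Set.Ici x) x :=
      (h1 x).hasDerivWithinAt.div hnr'.hasDerivWithinAt hsne
    have hT2 : HasDerivWithinAt (fun u => (v u).2 / nr u)
        (((w x).2 * nr x - (v x).2 *
          ((2 * (v x).1 * (w x).1 + 2 * (v x).2 * (w x).2) / (2 * nr x))) / nr x ^ 2)
        (Set.Ici x) x :=
      (h2 x).hasDerivWithinAt.div hnr'.hasDerivWithinAt hsne
    have hE' := ((hT1.sub hρx.cos).pow 2).add ((hT2.sub hρx.sin).pow 2)
    refine HasDerivWithinAt.congr_deriv hE' (Eq.symm ?_)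
    have hs2 : nr x ^ 2 = (v x).1 ^ 2 + (v x).2 ^ 2 := Real.sq_sqrt hqpos.le
    have hκx : κ x * nr x ^ 3 = (w x).2 * (v x).1 - (w x).1 * (v x).2 := by
      rw [hκ x]
      field_simp
      rfl
    have hk_eq : κ x = ((w x).2 * (v x).1 - (w x).1 * (v x).2) / (nr x) ^ 3 := hκ x
    simp only [f]
    rw [hk_eq]
    set c := Real.cos (ρ x)
    set d := Real.sin (ρ x)
    set s := nr x
    set p := (v x).1
    set q := (v x).2
    set p' := (w x).1
    set q' := (w x).2
    simp only [Pi.sub_apply]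
    push_cast
    field_simp
    have hinv : s * s⁻¹ = 1 := mul_inv_cancel₀ hsne
    linear_combination (2*c*p' + 2*d*q' - 2*s⁻¹*(p'*p + q'*q)) * hs2 +
      (-2*c*p'*q^2 + 2*c*q'*p*q + 2*d*p'*p*q - 2*d*q'*p^2) * hinv
  -- E is constant equal to E a
  have hconst := constant_of_has_deriv_right_zero hEcont hEderiv
  -- E a = 0
  have hρa : ρ a = ρ₀ := by
    rw [hρ a, intervalIntegral.integral_same, add_zero]
  have hsa : nr a ≠ 0 := ne_of_gt (hs_pos a ⟨le_refl a, hab⟩)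
  have hEa : E a = 0 := by
    have h1a : (v a).1 = nr a * Real.cos ρ₀ := by
      rw [show v a = nr a • ((Real.cos ρ₀, Real.sin ρ₀) : ℝ × ℝ) from hρ₀]
      simp [smul_eq_mul]
    have h2a : (v a).2 = nr a * Real.sin ρ₀ := by
      rw [show v a = nr a • ((Real.cos ρ₀, Real.sin ρ₀) : ℝ × ℝ) from hρ₀]
      simp [smul_eq_mul]
    simp only [hE_def, hρa, h1a, h2a]
    field_simp
    simp
  -- conclude
  intro t ht
  have hEt : E t = 0 := by rw [hconst t ht, hEa]
  have hsne : nr t ≠ 0 := ne_of_gt (hs_pos t ht)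
  have e1 : (v t).1 / nr t - Real.cos (ρ t) = 0 := by
    have h1nn := sq_nonneg ((v t).1 / nr t - Real.cos (ρ t))
    have h2nn := sq_nonneg ((v t).2 / nr t - Real.sin (ρ t))
    have : ((v t).1 / nr t - Real.cos (ρ t)) ^ 2 = 0 := by
      simp only [hE_def] at hEt; linarith
    exact pow_eq_zero_iff (by norm_num) |>.mp this
  have e2 : (v t).2 / nr t - Real.sin (ρ t) = 0 := by
    have h1nn := sq_nonneg ((v t).1 / nr t - Real.cos (ρ t))
    have h2nn := sq_nonneg ((v t).2 / nr t - Real.sin (ρ t))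
    have : ((v t).2 / nr t - Real.sin (ρ t)) ^ 2 = 0 := by
      simp only [hE_def] at hEt; linarith
    exact pow_eq_zero_iff (by norm_num) |>.mp this
  have e1' : (v t).1 = nr t * Real.cos (ρ t) := by
    field_simp at e1; linarith [e1]
  have e2' : (v t).2 = nr t * Real.sin (ρ t) := by
    field_simp at e2; linarith [e2]
  apply Prod.ext
  · simpa [smul_eq_mul] using e1'
  · simpa [smul_eq_mul] using e2'
end

section
/- Let α : [a,b] → ℝ² be a smooth curve parametrized by arc-length with signed curvature k(s) = ⟨α''(s), J·α'(s)⟩, and write TS(α)(s) = (z(s), w(s)). Then w'(s) = −k(s)·z(s) and k(s)·w(s) − z'(s) = 1 for all s ∈ [a,b]. -/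
/-- For an arc-length parametrized smooth curve `α` with signed curvature
`k(s) = ⟨α''(s), J·α'(s)⟩` (where `J` has rows `(0,−1)`, `(1,0)`), writing
`TS(α)(s) = (z(s), w(s))`, one has `w' = −k·z` and `k·w − z' = 1`. -/
theorem stmt6 (α : ℝ → ℝ × ℝ) (k z w : ℝ → ℝ)
    (hα : ContDiff ℝ (⊤ : ℕ∞) α)
    (hunit : ∀ s, (deriv α s).1 ^ 2 + (deriv α s).2 ^ 2 = 1)
    (hk : ∀ s, k s = (deriv (deriv α) s).2 * (deriv α s).1 -
        (deriv (deriv α) s).1 * (deriv α s).2)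
    (hz : ∀ s, z s = (TSa α s).1)
    (hw : ∀ s, w s = (TSa α s).2) :
    ∀ s, deriv w s = -k s * z s ∧ k s * w s - deriv z s = 1 := by
  have hα2 : ContDiff ℝ (⊤ : ℕ∞) α := hα.of_le (by simp)
  have hα' : ContDiff ℝ (⊤ : ℕ∞) (deriv α) := (contDiff_infty_iff_deriv.mp hα2).2
  intro s
  set a1 := (α s).1 with ha1
  set a2 := (α s).2 with ha2
  set b1 := (deriv α s).1 with hb1
  set b2 := (deriv α s).2 with hb2
  set c1 := (deriv (deriv α) s).1 with hc1
  set c2 := (deriv (deriv α) s).2 with hc2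
  have hαd : HasDerivAt α (deriv α s) s := (hα2.differentiable (by simp) s).hasDerivAt
  have hα'd : HasDerivAt (deriv α) (deriv (deriv α) s) s :=
    (hα'.differentiable (by simp) s).hasDerivAt
  have hx : HasDerivAt (fun t => (α t).1) b1 s := hαd.fst
  have hy : HasDerivAt (fun t => (α t).2) b2 s := hαd.snd
  have hx' : HasDerivAt (fun t => (deriv α t).1) c1 s := hα'd.fst
  have hy' : HasDerivAt (fun t => (deriv α t).2) c2 s := hα'd.snd
  -- orthogonality from unit speed
  have hp : b1 * c1 + b2 * c2 = 0 := by
    have h1 : HasDerivAt (fun t => (deriv α t).1 ^ 2 + (deriv α t).2 ^ 2)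
        (2 * b1 * c1 + 2 * b2 * c2) s := by
      have : HasDerivAt (fun t => (deriv α t).1 ^ 2 + (deriv α t).2 ^ 2)
          ((2 : ℕ) * (deriv α s).1 ^ (2 - 1) * c1 + (2 : ℕ) * (deriv α s).2 ^ (2 - 1) * c2) s :=
        (hx'.pow 2).add (hy'.pow 2)
      convert this using 1
      ring
    have h2 : (fun t => (deriv α t).1 ^ 2 + (deriv α t).2 ^ 2) = fun _ => (1 : ℝ) :=
      funext fun t => hunit t
    rw [h2] at h1
    have := h1.unique (hasDerivAt_const s 1)
    linarith
  have hu : b1 ^ 2 + b2 ^ 2 = 1 := hunit s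
  -- derivative of w
  have hwfun : w = fun t => (α t).1 * (deriv α t).2 - (α t).2 * (deriv α t).1 :=
    funext fun t => by rw [hw t]; rfl
  have hwd : HasDerivAt w (b1 * b2 + a1 * c2 - (b2 * b1 + a2 * c1)) s := by
    rw [hwfun]; exact (hx.mul hy').sub (hy.mul hx')
  -- derivative of z
  have hzfun : z = fun t => -(deriv α t).1 * (α t).1 - (deriv α t).2 * (α t).2 :=
    funext fun t => by rw [hz t]; rfl
  have hzd : HasDerivAt z (-c1 * a1 + -b1 * b1 - (c2 * a2 + b2 * b2)) s := by
    rw [hzfun]; exact ((hx'.neg.mul hx)).sub (hy'.mul hy)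
  rw [hwd.deriv, hzd.deriv, hk s, hz s, hw s]
  show _ = -(c2 * b1 - c1 * b2) * (-b1 * a1 - b2 * a2) ∧
    (c2 * b1 - c1 * b2) * (a1 * b2 - a2 * b1) - _ = 1
  constructor
  · linear_combination (a2 * c1 - a1 * c2) * hu + (a1 * b2 - a2 * b1) * hp
  · linear_combination (1 - a1 * c1 - a2 * c2) * hu + (a1 * b1 + a2 * b2) * hp
end

section
/- Let α : [a,b] → ℝ² be a regular curve and write TS(α)(t) = (z(t), w(t)). Then there exists a continuous function f : [a,b] → ℝ such that w'(t) = −f(t)·z(t) and w(t)·f(t) − z'(t) = |α'(t)| > 0 for all t ∈ [a,b]. -/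
/-- For a regular curve `α : [a,b] → ℝ²`, writing `TS(α)(t) = (z(t), w(t))`, there is a
continuous function `f` on `[a,b]` with `w' = −f·z` and `w·f − z' = |α'| > 0` on `[a,b]`. -/
theorem stmt7 (a b : ℝ) (α : ℝ → ℝ × ℝ)
    (hα : ContDiff ℝ (⊤ : ℕ∞) α)
    (hreg : ∀ t ∈ Set.Icc a b, deriv α t ≠ 0) :
    ∃ f : ℝ → ℝ, ContinuousOn f (Set.Icc a b) ∧ ∀ t ∈ Set.Icc a b,
      deriv (fun u => (TS α u).2) t = -f t * (TS α t).1 ∧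
      (TS α t).2 * f t - deriv (fun u => (TS α u).1) t
        = Real.sqrt ((deriv α t).1 ^ 2 + (deriv α t).2 ^ 2) ∧
      0 < Real.sqrt ((deriv α t).1 ^ 2 + (deriv α t).2 ^ 2) := by
  have hα' : ContDiff ℝ ((⊤:ℕ∞):WithTop ℕ∞) α := hα.of_le (by simp)
  have hβ : ContDiff ℝ (⊤:ℕ∞) (deriv α) := (contDiff_infty_iff_deriv.mp hα').2
  have hγ : ContDiff ℝ (⊤:ℕ∞) (deriv (deriv α)) := (contDiff_infty_iff_deriv.mp hβ).2
  have hαd : Differentiable ℝ α := hα'.differentiable (by simp)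
  have hβd : Differentiable ℝ (deriv α) := hβ.differentiable (by simp)
  have hQpos : ∀ t ∈ Set.Icc a b, 0 < (deriv α t).1 ^ 2 + (deriv α t).2 ^ 2 := by
    intro t ht
    have h1 : (deriv α t).1 ≠ 0 ∨ (deriv α t).2 ≠ 0 := by
      by_contra hc; push_neg at hc; exact hreg t ht (Prod.ext hc.1 hc.2)
    rcases h1 with h1 | h1
    · positivity
    · positivity
  refine ⟨fun t => ((deriv α t).1 * (deriv (deriv α) t).2
      - (deriv (deriv α) t).1 * (deriv α t).2)
      / ((deriv α t).1 ^ 2 + (deriv α t).2 ^ 2), ?_, ?_⟩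
  · apply ContinuousOn.div
    · exact (((hβ.continuous.fst).mul (hγ.continuous.snd)).sub
        ((hγ.continuous.fst).mul (hβ.continuous.snd))).continuousOn
    · exact (((hβ.continuous.fst).pow 2).add ((hβ.continuous.snd).pow 2)).continuousOn
    · intro t ht; exact (hQpos t ht).ne'
  intro t ht
  have hQ : 0 < (deriv α t).1 ^ 2 + (deriv α t).2 ^ 2 := hQpos t ht
  set X := (α t).1 with hX
  set Y := (α t).2 with hY
  set X1 := (deriv α t).1 with hX1
  set Y1 := (deriv α t).2 with hY1
  set X2 := (deriv (deriv α) t).1 with hX2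
  set Y2 := (deriv (deriv α) t).2 with hY2
  set R := Real.sqrt (X1 ^ 2 + Y1 ^ 2) with hR
  have hRpos : 0 < R := Real.sqrt_pos.mpr hQ
  have hRne : R ≠ 0 := hRpos.ne'
  have hR2 : R ^ 2 = X1 ^ 2 + Y1 ^ 2 := Real.sq_sqrt hQ.le
  have hQne : X1 ^ 2 + Y1 ^ 2 ≠ 0 := hQ.ne'
  -- basic derivatives
  have hx : HasDerivAt (fun u => (α u).1) X1 t := (hαd t).hasDerivAt.fst
  have hy : HasDerivAt (fun u => (α u).2) Y1 t := (hαd t).hasDerivAt.snd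
  have hx1 : HasDerivAt (fun u => (deriv α u).1) X2 t := (hβd t).hasDerivAt.fst
  have hy1 : HasDerivAt (fun u => (deriv α u).2) Y2 t := (hβd t).hasDerivAt.snd
  have hq : HasDerivAt (fun u => (deriv α u).1 ^ 2 + (deriv α u).2 ^ 2)
      (2 * X1 * X2 + 2 * Y1 * Y2) t := by
    have := ((hx1.fun_pow 2).fun_add (hy1.fun_pow 2))
    refine this.congr_deriv ?_
    push_cast; rw [hX1, hY1]; ring
  have hr : HasDerivAt (fun u => Real.sqrt ((deriv α u).1 ^ 2 + (deriv α u).2 ^ 2))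
      ((2 * X1 * X2 + 2 * Y1 * Y2) / (2 * R)) t := hq.sqrt hQne
  have hrinv : HasDerivAt (fun u => (Real.sqrt ((deriv α u).1 ^ 2 + (deriv α u).2 ^ 2))⁻¹)
      (-((2 * X1 * X2 + 2 * Y1 * Y2) / (2 * R)) / R ^ 2) t := hr.inv hRne
  -- numerator derivatives
  have hwnum : HasDerivAt (fun u => (α u).1 * (deriv α u).2 - (α u).2 * (deriv α u).1)
      (X1 * Y1 + X * Y2 - (Y1 * X1 + Y * X2)) t := (hx.mul hy1).sub (hy.mul hx1)
  have hznum : HasDerivAt (fun u => -(deriv α u).1 * (α u).1 - (deriv α u).2 * (α u).2)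
      (-X2 * X + -X1 * X1 - (Y2 * Y + Y1 * Y1)) t := ((hx1.neg.mul hx)).sub (hy1.mul hy)
  have hfun2 : (fun u => (TS α u).2)
      = fun u => (Real.sqrt ((deriv α u).1 ^ 2 + (deriv α u).2 ^ 2))⁻¹
          * ((α u).1 * (deriv α u).2 - (α u).2 * (deriv α u).1) := by
    funext u; simp [TS]
  have hfun1 : (fun u => (TS α u).1)
      = fun u => (Real.sqrt ((deriv α u).1 ^ 2 + (deriv α u).2 ^ 2))⁻¹
          * (-(deriv α u).1 * (α u).1 - (deriv α u).2 * (α u).2) := by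
    funext u; simp [TS]
  have hw : HasDerivAt (fun u => (TS α u).2)
      (-((2 * X1 * X2 + 2 * Y1 * Y2) / (2 * R)) / R ^ 2 * (X * Y1 - Y * X1)
        + R⁻¹ * (X1 * Y1 + X * Y2 - (Y1 * X1 + Y * X2))) t := by
    rw [hfun2]
    exact hrinv.mul hwnum
  have hz : HasDerivAt (fun u => (TS α u).1)
      (-((2 * X1 * X2 + 2 * Y1 * Y2) / (2 * R)) / R ^ 2 * (-X1 * X - Y1 * Y)
        + R⁻¹ * (-X2 * X + -X1 * X1 - (Y2 * Y + Y1 * Y1))) t := by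
    rw [hfun1]
    exact hrinv.mul hznum
  have hTS1 : (TS α t).1 = R⁻¹ * (-X1 * X - Y1 * Y) := by simp [TS]; rfl
  have hTS2 : (TS α t).2 = R⁻¹ * (X * Y1 - Y * X1) := by simp [TS]; rfl
  have e1 : -((2 * X1 * X2 + 2 * Y1 * Y2) / (2 * R)) / R ^ 2
      = -((X1 * X2 + Y1 * Y2) * R) / (X1 ^ 2 + Y1 ^ 2) ^ 2 := by
    rw [← hR2]; field_simp
  have e2 : R⁻¹ = R / (X1 ^ 2 + Y1 ^ 2) := by
    rw [← hR2]; field_simp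
  refine ⟨?_, ?_, hRpos⟩
  · simp only [← hX1, ← hY1, ← hX2, ← hY2]; rw [hw.deriv, hTS1, e1, e2]
    field_simp
    ring
  · simp only [← hX1, ← hY1, ← hX2, ← hY2]; rw [hz.deriv, hTS2, e1, e2]
    rw [show R = R * (X1 ^ 2 + Y1 ^ 2) / (X1 ^ 2 + Y1 ^ 2) by field_simp]
    field_simp
    ring
end

section
/- Let z, w : [a,b] → ℝ be smooth functions, let f : [a,b] → ℝ be a continuous function such that w'(s) = −f(s)·z(s) and f(s)·w(s) − z'(s) > 0 for all s, and let F : [a,b] → ℝ be any antiderivative of f (F' = f). Define γ(s) = (z(s), w(s)) and α(s) = −A(−F(s))·γ(s). Then α is a regular curve with |α'(s)| = f(s)·w(s) − z'(s) for all s, and TS(α)(s) = γ(s) for all s ∈ [a,b]. -/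
/-- Inverse formula for the TreadmillSled: if `z, w` are smooth, `f` is continuous with
`w' = −f·z` and `f·w − z' > 0` on `[a,b]`, `F` is an antiderivative of `f`,
`γ = (z, w)` and `α = −A(−F)·γ`, then `α` is a regular curve with
`|α'| = f·w − z'` and `TS(α) = γ` on `[a,b]`. -/
theorem stmt8 (a b : ℝ) (z w f F : ℝ → ℝ) (γ α : ℝ → ℝ × ℝ)
    (hz : ContDiff ℝ (⊤ : ℕ∞) z) (hw : ContDiff ℝ (⊤ : ℕ∞) w)
    (hf : ContinuousOn f (Set.Icc a b))
    (hw' : ∀ s ∈ Set.Icc a b, deriv w s = -f s * z s)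
    (hpos : ∀ s ∈ Set.Icc a b, 0 < f s * w s - deriv z s)
    (hF : ∀ s ∈ Set.Icc a b, HasDerivAt F (f s) s)
    (hγ : ∀ s, γ s = (z s, w s))
    (hα : ∀ s, α s = -(rotA (-F s) (γ s))) :
    ∀ s ∈ Set.Icc a b,
      deriv α s ≠ 0 ∧
      Real.sqrt ((deriv α s).1 ^ 2 + (deriv α s).2 ^ 2) = f s * w s - deriv z s ∧
      TS α s = γ s := by
  have hαdef : α = fun t => (Real.sin (F t) * w t - Real.cos (F t) * z t,
      -(Real.sin (F t) * z t) - Real.cos (F t) * w t) := by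
    funext t
    rw [hα, hγ]
    simp only [rotA, Real.cos_neg, Real.sin_neg, Prod.neg_mk, Prod.mk.injEq]
    constructor <;> ring
  intro s hs
  have hzd : HasDerivAt z (deriv z s) s :=
    ((hz.differentiable (by simp)) s).hasDerivAt
  have hwd : HasDerivAt w (-f s * z s) s := by
    have h := ((hw.differentiable (by simp)) s).hasDerivAt
    rwa [hw' s hs] at h
  have hFd : HasDerivAt F (f s) s := hF s hs
  set k := f s * w s - deriv z s with hk
  have hkpos : 0 < k := hpos s hs
  have hs1 : HasDerivAt (fun t => Real.sin (F t)) (Real.cos (F s) * f s) s :=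
    (Real.hasDerivAt_sin (F s)).comp s hFd
  have hc1 : HasDerivAt (fun t => Real.cos (F t)) (-Real.sin (F s) * f s) s :=
    (Real.hasDerivAt_cos (F s)).comp s hFd
  have h1 : HasDerivAt (fun t => Real.sin (F t) * w t - Real.cos (F t) * z t)
      (Real.cos (F s) * k) s := by
    have h := (hs1.mul hwd).sub (hc1.mul hzd)
    exact h.congr_deriv (by rw [hk]; ring)
  have h2 : HasDerivAt (fun t => -(Real.sin (F t) * z t) - Real.cos (F t) * w t)
      (Real.sin (F s) * k) s := by
    have h := ((hs1.mul hzd).neg).sub (hc1.mul hwd)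
    exact h.congr_deriv (by rw [hk]; ring)
  have hD : HasDerivAt α (Real.cos (F s) * k, Real.sin (F s) * k) s := by
    rw [hαdef]; exact h1.prodMk h2
  have hderiv : deriv α s = (Real.cos (F s) * k, Real.sin (F s) * k) := hD.deriv
  have hsum : (Real.cos (F s) * k) ^ 2 + (Real.sin (F s) * k) ^ 2 = k ^ 2 := by
    linear_combination k ^ 2 * Real.cos_sq_add_sin_sq (F s)
  have hsqrt : Real.sqrt ((deriv α s).1 ^ 2 + (deriv α s).2 ^ 2) = k := by
    rw [hderiv]
    simp only
    rw [hsum, Real.sqrt_sq hkpos.le]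
  refine ⟨?_, hsqrt, ?_⟩
  · intro h
    rw [h] at hsqrt
    simp at hsqrt
    exact absurd hsqrt.symm hkpos.ne'
  · have hkne : k ≠ 0 := hkpos.ne'
    rw [TS, hsqrt, hderiv, hγ]
    have hα1 : (α s).1 = Real.sin (F s) * w s - Real.cos (F s) * z s := by rw [hαdef]
    have hα2 : (α s).2 = -(Real.sin (F s) * z s) - Real.cos (F s) * w s := by rw [hαdef]
    have hpy := Real.cos_sq_add_sin_sq (F s)
    simp only [Prod.smul_mk, smul_eq_mul, Prod.mk.injEq]
    rw [hα1, hα2]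
    constructor
    · field_simp
      linear_combination z s * hpy
    · field_simp
      linear_combination w s * hpy
end

section
/- Let α : [a,b] → ℝ² be a regular curve and write TS(α)(t) = (z(t), w(t)). If z(t₀) = 0 for some t₀ ∈ [a,b], then w'(t₀) = 0; that is, the velocity vector of the curve TS(α) is horizontal at every point where TS(α) meets the y-axis. -/
/-- For a regular curve `α : [a,b] → ℝ²` with `TS(α) = (z, w)`: if `z(t₀) = 0` for some
`t₀ ∈ [a,b]`, then `w'(t₀) = 0`; the velocity of `TS(α)` is horizontal where it meets the
`y`-axis. -/
theorem stmt9 (a b t₀ : ℝ) (α : ℝ → ℝ × ℝ)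
    (hα : ContDiff ℝ (⊤ : ℕ∞) α)
    (hreg : ∀ t ∈ Set.Icc a b, deriv α t ≠ 0)
    (ht₀ : t₀ ∈ Set.Icc a b)
    (hz : (TS α t₀).1 = 0) :
    deriv (fun t => (TS α t).2) t₀ = 0 := by
  set p := deriv α with hp_def
  have hα' : ContDiff ℝ (↑(⊤:ℕ∞)) α := hα.of_le (by simp)
  have hp_smooth : ContDiff ℝ (↑(⊤:ℕ∞)) p := (contDiff_infty_iff_deriv.mp hα').2
  have hA : HasDerivAt α (p t₀) t₀ := (hα'.differentiable (by simp) t₀).hasDerivAt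
  have hP : HasDerivAt p (deriv p t₀) t₀ := (hp_smooth.differentiable (by simp) t₀).hasDerivAt
  set x := (α t₀).1
  set y := (α t₀).2
  set x' := (p t₀).1
  set y' := (p t₀).2
  set x'' := (deriv p t₀).1
  set y'' := (deriv p t₀).2
  have hg₀ : (0:ℝ) < x'^2 + y'^2 := by
    rcases (Prod.mk.injEq _ _ _ _) with _
    have h := hreg t₀ ht₀
    have : x' ≠ 0 ∨ y' ≠ 0 := by
      by_contra hc
      push_neg at hc
      exact h (Prod.ext hc.1 hc.2)
    rcases this with h1 | h1 <;> positivity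
  set s₀ := Real.sqrt (x'^2 + y'^2) with hs₀_def
  have hs₀pos : 0 < s₀ := Real.sqrt_pos.mpr hg₀
  have hs₀ne : s₀ ≠ 0 := ne_of_gt hs₀pos
  have hs₀sq : s₀^2 = x'^2 + y'^2 := Real.sq_sqrt hg₀.le
  -- derivatives of components
  have hx : HasDerivAt (fun t => (α t).1) x' t₀ := hA.fst
  have hy : HasDerivAt (fun t => (α t).2) y' t₀ := hA.snd
  have hx' : HasDerivAt (fun t => (p t).1) x'' t₀ := hP.fst
  have hy' : HasDerivAt (fun t => (p t).2) y'' t₀ := hP.snd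
  have hg : HasDerivAt (fun t => (p t).1 ^ 2 + (p t).2 ^ 2)
      (2 * x' * x'' + 2 * y' * y'') t₀ := by
    have h1 := (hx'.fun_pow 2).fun_add (hy'.fun_pow 2)
    exact h1.congr_deriv (by ring)
  have hs : HasDerivAt (fun t => Real.sqrt ((p t).1 ^ 2 + (p t).2 ^ 2))
      (1 / (2 * s₀) * (2 * x' * x'' + 2 * y' * y'')) t₀ :=
    (Real.hasDerivAt_sqrt hg₀.ne').comp t₀ hg
  have hsinv : HasDerivAt (fun t => (Real.sqrt ((p t).1 ^ 2 + (p t).2 ^ 2))⁻¹)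
      (-(1 / (2 * s₀) * (2 * x' * x'' + 2 * y' * y'')) / s₀ ^ 2) t₀ := hs.inv hs₀ne
  have hn : HasDerivAt (fun t => (α t).1 * (p t).2 - (α t).2 * (p t).1)
      (x' * y' + x * y'' - (y' * x' + y * x'')) t₀ := (hx.mul hy').sub (hy.mul hx')
  have hfun : (fun t => (TS α t).2) =
      fun t => (Real.sqrt ((p t).1 ^ 2 + (p t).2 ^ 2))⁻¹ *
        ((α t).1 * (p t).2 - (α t).2 * (p t).1) := by
    funext t
    simp [TS, Prod.smul_snd, smul_eq_mul, hp_def]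
  have hw : HasDerivAt (fun t => (TS α t).2)
      (-(1 / (2 * s₀) * (2 * x' * x'' + 2 * y' * y'')) / s₀ ^ 2 * (x * y' - y * x') +
        s₀⁻¹ * (x' * y' + x * y'' - (y' * x' + y * x''))) t₀ := by
    rw [hfun]
    exact hsinv.mul hn
  rw [hw.deriv]
  -- use hz to get the orthogonality relation
  have hu : -x' * x - y' * y = 0 := by
    simp only [TS, Prod.smul_fst, smul_eq_mul, ← hp_def] at hz
    rcases mul_eq_zero.mp hz with h | h
    · exact absurd h (by simpa [hs₀_def] using inv_ne_zero hs₀ne)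
    · exact h
  have key : -(x' * x'' + y' * y'') * (x * y' - y * x') + (x' ^ 2 + y' ^ 2) * (x * y'' - y * x'') = 0 := by
    linear_combination (x'' * y' - x' * y'') * hu
  have hVal : -(1 / (2 * s₀) * (2 * x' * x'' + 2 * y' * y'')) / s₀ ^ 2 * (x * y' - y * x') +
        s₀⁻¹ * (x' * y' + x * y'' - (y' * x' + y * x'')) =
      (-(x' * x'' + y' * y'') * (x * y' - y * x') + s₀ ^ 2 * (x * y'' - y * x'')) / s₀ ^ 3 := by
    field_simp
    ring
  rw [hVal, hs₀sq, key, zero_div]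
end

section
/- Let α : [a,b] → ℝ² be a regular curve and write TS(α)(t) = (z(t), w(t)). If z is constant on [a,b] (i.e., TS(α) lies in a vertical line), then w(t) ≠ 0 for all t ∈ [a,b]. In particular, TS(α) cannot meet the x-axis while lying in a vertical line, so no whole vertical line is the TreadmillSled of a regular curve. -/
/-- For a regular curve `α : [a,b] → ℝ²` with `TS(α) = (z, w)`: if `z` is constant on
`[a,b]` (the TreadmillSled lies in a vertical line), then `w(t) ≠ 0` for all `t ∈ [a,b]`;
in particular no whole vertical line is the TreadmillSled of a regular curve. -/
theorem stmt10 (a b : ℝ) (hab : a < b) (α : ℝ → ℝ × ℝ)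
    (hα : ContDiff ℝ (⊤ : ℕ∞) α)
    (hreg : ∀ t ∈ Set.Icc a b, deriv α t ≠ 0)
    (hconst : ∀ t ∈ Set.Icc a b, (TS α t).1 = (TS α a).1) :
    ∀ t ∈ Set.Icc a b, (TS α t).2 ≠ 0 := by
  have hα' : ContDiff ℝ (⊤ : ℕ∞) α := hα.of_le (by simp)
  have hdiff : Differentiable ℝ α := hα'.differentiable (by simp)
  have hαd : ContDiff ℝ (⊤ : ℕ∞) (deriv α) := (contDiff_infty_iff_deriv.mp hα').2
  have hdiff2 : Differentiable ℝ (deriv α) := hαd.differentiable (by simp)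
  have hdiff3 : Differentiable ℝ (deriv (deriv α)) :=
    ((contDiff_infty_iff_deriv.mp hαd).2).differentiable (by simp)
  -- abbreviations (as plain functions)
  set x : ℝ → ℝ := fun t => (α t).1 with hxdef
  set y : ℝ → ℝ := fun t => (α t).2 with hydef
  set x' : ℝ → ℝ := fun t => (deriv α t).1 with hx'def
  set y' : ℝ → ℝ := fun t => (deriv α t).2 with hy'def
  set x'' : ℝ → ℝ := fun t => (deriv (deriv α) t).1 with hx''def
  set y'' : ℝ → ℝ := fun t => (deriv (deriv α) t).2 with hy''def
  have hv2pos : ∀ t ∈ Set.Icc a b, 0 < x' t ^ 2 + y' t ^ 2 := by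
    intro t ht
    have h1 : x' t ≠ 0 ∨ y' t ≠ 0 := by
      by_contra hc
      push_neg at hc
      apply hreg t ht
      rw [Prod.ext_iff]
      exact ⟨hc.1, hc.2⟩
    rcases h1 with h | h <;> positivity
  have hspos : ∀ t ∈ Set.Icc a b, 0 < Real.sqrt (x' t ^ 2 + y' t ^ 2) :=
    fun t ht => Real.sqrt_pos.mpr (hv2pos t ht)
  -- derivatives of the components
  have hx : ∀ t, HasDerivAt x (x' t) t := fun t => ((hdiff t).hasDerivAt).fst
  have hy : ∀ t, HasDerivAt y (y' t) t := fun t => ((hdiff t).hasDerivAt).snd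
  have hx' : ∀ t, HasDerivAt x' (x'' t) t := fun t => ((hdiff2 t).hasDerivAt).fst
  have hy' : ∀ t, HasDerivAt y' (y'' t) t := fun t => ((hdiff2 t).hasDerivAt).snd
  -- f = ⟨α', α⟩ and v2 = |α'|²
  have hf : ∀ t, HasDerivAt (fun s => x' s * x s + y' s * y s)
      (x'' t * x t + x' t * x' t + (y'' t * y t + y' t * y' t)) t :=
    fun t => ((hx' t).mul (hx t)).add ((hy' t).mul (hy t))
  have hv2 : ∀ t, HasDerivAt (fun s => x' s ^ 2 + y' s ^ 2)
      (2 * x' t ^ 1 * x'' t + 2 * y' t ^ 1 * y'' t) t :=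
    fun t => ((hx' t).pow 2).add ((hy' t).pow 2)
  -- the constancy hypothesis, rewritten
  set c : ℝ := (Real.sqrt (x' a ^ 2 + y' a ^ 2))⁻¹ * (x' a * x a + y' a * y a) with hcdef
  have hfc : ∀ t ∈ Set.Icc a b,
      x' t * x t + y' t * y t = c * Real.sqrt (x' t ^ 2 + y' t ^ 2) := by
    intro t ht
    have ha : a ∈ Set.Icc a b := Set.left_mem_Icc.mpr hab.le
    have h := hconst t ht
    simp only [TS, Prod.smul_fst, smul_eq_mul] at h
    have e1 : ∀ s : ℝ, (deriv α s).1 = x' s := fun _ => rfl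
    have e2 : ∀ s : ℝ, (deriv α s).2 = y' s := fun _ => rfl
    have e3 : ∀ s : ℝ, (α s).1 = x s := fun _ => rfl
    have e4 : ∀ s : ℝ, (α s).2 = y s := fun _ => rfl
    simp only [e1, e2, e3, e4] at h
    have hst := (hspos t ht).ne'
    have hsa := (hspos a ha).ne'
    rw [hcdef]
    field_simp at h ⊢
    linear_combination -h
  -- key identity on the open interval
  have hkey : ∀ t ∈ Set.Ioo a b,
      (x t * y' t - y t * x' t) * (x' t * y'' t - x'' t * y' t)
        = (x' t ^ 2 + y' t ^ 2) ^ 2 := by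
    intro t ht
    have htIcc : t ∈ Set.Icc a b := Set.Ioo_subset_Icc_self ht
    have hv2ne : x' t ^ 2 + y' t ^ 2 ≠ 0 := (hv2pos t htIcc).ne'
    -- derivative of v = sqrt v2
    have hv : HasDerivAt (fun s => Real.sqrt (x' s ^ 2 + y' s ^ 2))
        ((2 * x' t ^ 1 * x'' t + 2 * y' t ^ 1 * y'' t)
          / (2 * Real.sqrt (x' t ^ 2 + y' t ^ 2))) t := (hv2 t).sqrt hv2ne
    have hmem : Set.Icc a b ∈ nhds t := Icc_mem_nhds ht.1 ht.2
    have heq : (fun s => x' s * x s + y' s * y s)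
        =ᶠ[nhds t] fun s => c * Real.sqrt (x' s ^ 2 + y' s ^ 2) :=
      Filter.eventually_of_mem hmem fun s hs => hfc s hs
    have h1 : HasDerivAt (fun s => x' s * x s + y' s * y s)
        (c * ((2 * x' t ^ 1 * x'' t + 2 * y' t ^ 1 * y'' t)
          / (2 * Real.sqrt (x' t ^ 2 + y' t ^ 2)))) t :=
      (hv.const_mul c).congr_of_eventuallyEq heq
    have h2 : x'' t * x t + x' t * x' t + (y'' t * y t + y' t * y' t)
        = c * ((2 * x' t ^ 1 * x'' t + 2 * y' t ^ 1 * y'' t)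
          / (2 * Real.sqrt (x' t ^ 2 + y' t ^ 2))) := (hf t).unique h1
    set s := Real.sqrt (x' t ^ 2 + y' t ^ 2) with hsdef
    have hs0 : s ≠ 0 := (hspos t htIcc).ne'
    have hssq : s ^ 2 = x' t ^ 2 + y' t ^ 2 := Real.sq_sqrt (hv2pos t htIcc).le
    have hE : (x'' t * x t + x' t * x' t + (y'' t * y t + y' t * y' t)) * s ^ 2
        = (c * s) * (x' t * x'' t + y' t * y'' t) := by
      rw [h2]; field_simp
    rw [hssq, ← hfc t htIcc] at hE
    linarith [hE, sq_nonneg (x t * y' t - y t * x' t)]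
  -- extend to the closed interval by continuity
  have hcx : Continuous x := hα'.continuous.fst
  have hcy : Continuous y := hα'.continuous.snd
  have hcx' : Continuous x' := hdiff2.continuous.fst
  have hcy' : Continuous y' := hdiff2.continuous.snd
  have hcx'' : Continuous x'' := hdiff3.continuous.fst
  have hcy'' : Continuous y'' := hdiff3.continuous.snd
  have hcont : Continuous (fun t =>
      (x t * y' t - y t * x' t) * (x' t * y'' t - x'' t * y' t)
        - (x' t ^ 2 + y' t ^ 2) ^ 2) := by fun_prop
  have hkeyIcc : ∀ t ∈ Set.Icc a b,
      (x t * y' t - y t * x' t) * (x' t * y'' t - x'' t * y' t)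
        = (x' t ^ 2 + y' t ^ 2) ^ 2 := by
    have h0 : Set.EqOn (fun t =>
        (x t * y' t - y t * x' t) * (x' t * y'' t - x'' t * y' t)
          - (x' t ^ 2 + y' t ^ 2) ^ 2) 0 (Set.Ioo a b) := by
      intro t ht
      have := hkey t ht
      simp only [Pi.zero_apply]
      linarith
    have h1 := h0.closure hcont continuous_const
    intro t ht
    have ht' : t ∈ closure (Set.Ioo a b) := by
      rwa [closure_Ioo hab.ne]
    have := h1 ht'
    simp only [Pi.zero_apply] at this
    linarith
  -- conclude
  intro t ht
  have hg : x t * y' t - y t * x' t ≠ 0 := by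
    intro h0
    have := hkeyIcc t ht
    rw [h0, zero_mul] at this
    exact absurd this.symm (pow_ne_zero 2 (hv2pos t ht).ne')
  have hTS : (TS α t).2 = (Real.sqrt (x' t ^ 2 + y' t ^ 2))⁻¹
      * (x t * y' t - y t * x' t) := by
    simp only [TS, Prod.smul_snd, smul_eq_mul]
    rfl
  rw [hTS]
  exact mul_ne_zero (inv_ne_zero (hspos t ht).ne') hg
end

section
/- Let α : [a,b] → ℝ² be a regular curve and write TS(α)(t) = (z(t), w(t)). If z(t) = 0 for all t ∈ [a,b] (i.e., TS(α) lies in the y-axis), then w is constant; that is, TS(α) reduces to a single point on the y-axis. -/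
/-- For a regular curve `α : [a,b] → ℝ²` with `TS(α) = (z, w)`: if `z ≡ 0` on `[a,b]`
(the TreadmillSled lies in the `y`-axis), then `w` is constant on `[a,b]`; that is,
`TS(α)` reduces to a single point on the `y`-axis. -/
theorem stmt11 (a b : ℝ) (α : ℝ → ℝ × ℝ)
    (hα : ContDiff ℝ (⊤ : ℕ∞) α)
    (hreg : ∀ t ∈ Set.Icc a b, deriv α t ≠ 0)
    (hz : ∀ t ∈ Set.Icc a b, (TS α t).1 = 0) :
    ∀ s ∈ Set.Icc a b, ∀ t ∈ Set.Icc a b, (TS α s).2 = (TS α t).2 := by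
  intro s hs t ht
  rcases eq_or_lt_of_le (hs.1.trans hs.2) with hab | hab
  · -- degenerate case a = b
    have hsa : s = a := le_antisymm (hab ▸ hs.2) hs.1
    have hta : t = a := le_antisymm (hab ▸ ht.2) ht.1
    rw [hsa, hta]
  have hdα : Differentiable ℝ α := hα.differentiable (by simp)
  -- component derivatives
  have hx : ∀ u, HasDerivAt (fun v => (α v).1) (deriv α u).1 u := by
    intro u
    have h := ((hdα u).hasDerivAt).hasFDerivAt
    simpa using h.fst.hasDerivAt
  have hy : ∀ u, HasDerivAt (fun v => (α v).2) (deriv α u).2 u := by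
    intro u
    have h := ((hdα u).hasDerivAt).hasFDerivAt
    simpa using h.snd.hasDerivAt
  -- positivity of the speed
  have hpos : ∀ u ∈ Set.Icc a b, 0 < (deriv α u).1 ^ 2 + (deriv α u).2 ^ 2 := by
    intro u hu
    rcases eq_or_ne (deriv α u).1 0 with h1 | h1
    · have h2 : (deriv α u).2 ≠ 0 := by
        intro h2; exact hreg u hu (Prod.ext h1 h2)
      have := sq_nonneg (deriv α u).1
      have h2' : 0 < (deriv α u).2 ^ 2 := by positivity
      linarith
    · have h1' : 0 < (deriv α u).1 ^ 2 := by positivity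
      have := sq_nonneg (deriv α u).2
      linarith
  -- inner product vanishes
  have hinner : ∀ u ∈ Set.Icc a b,
      (α u).1 * (deriv α u).1 + (α u).2 * (deriv α u).2 = 0 := by
    intro u hu
    have h1 := hz u hu
    have hn : Real.sqrt ((deriv α u).1 ^ 2 + (deriv α u).2 ^ 2) ≠ 0 :=
      Real.sqrt_ne_zero'.mpr (hpos u hu)
    simp only [TS, Prod.smul_mk, smul_eq_mul] at h1
    rcases mul_eq_zero.mp h1 with h | h
    · exact absurd (inv_eq_zero.mp h) hn
    · linarith [h]
  -- f = |α|² is constant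
  set f : ℝ → ℝ := fun u => (α u).1 ^ 2 + (α u).2 ^ 2 with hfdef
  have hf' : ∀ u, HasDerivAt f
      (2 * (α u).1 * (deriv α u).1 + 2 * (α u).2 * (deriv α u).2) u := by
    intro u
    have h1 := ((hx u).fun_pow 2).fun_add ((hy u).fun_pow 2)
    refine h1.congr_deriv ?_
    ring
  have hconst : ∀ u ∈ Set.Icc a b, f u = f a := by
    apply constant_of_derivWithin_zero
    · exact fun u _ => ((hf' u).differentiableAt).differentiableWithinAt
    · intro u hu
      have hud : UniqueDiffWithinAt ℝ (Set.Icc a b) u :=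
        (uniqueDiffOn_Icc hab) u (Set.Ico_subset_Icc_self hu)
      rw [((hf' u).hasDerivWithinAt).derivWithin hud]
      have := hinner u (Set.Ico_subset_Icc_self hu)
      linarith
  -- the second component, explicitly
  have hTS2 : ∀ u, (TS α u).2 =
      (Real.sqrt ((deriv α u).1 ^ 2 + (deriv α u).2 ^ 2))⁻¹ *
        ((α u).1 * (deriv α u).2 - (α u).2 * (deriv α u).1) := by
    intro u; simp [TS]
  -- squared identity
  have hsq : ∀ u ∈ Set.Icc a b, (TS α u).2 ^ 2 = f a := by
    intro u hu
    have hp := hpos u hu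
    have hin := hinner u hu
    have hN : Real.sqrt ((deriv α u).1 ^ 2 + (deriv α u).2 ^ 2) ^ 2
        = (deriv α u).1 ^ 2 + (deriv α u).2 ^ 2 := Real.sq_sqrt hp.le
    rw [hTS2 u, mul_pow, inv_pow, hN]
    have hE : ((α u).1 * (deriv α u).2 - (α u).2 * (deriv α u).1) ^ 2
        = f u * ((deriv α u).1 ^ 2 + (deriv α u).2 ^ 2) := by
      simp only [hfdef]
      nlinarith [hin, sq_nonneg ((α u).1 * (deriv α u).1 + (α u).2 * (deriv α u).2)]
    rw [hE, ← hconst u hu]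
    field_simp
  -- continuity of the second component on [a,b]
  have hcd : Continuous (deriv α) := hα.continuous_deriv (by simp)
  have hcα : Continuous α := hα.continuous
  have hc : ContinuousOn (fun u => (TS α u).2) (Set.Icc a b) := by
    have h1 : ContinuousOn (fun u =>
        (Real.sqrt ((deriv α u).1 ^ 2 + (deriv α u).2 ^ 2))⁻¹ *
          ((α u).1 * (deriv α u).2 - (α u).2 * (deriv α u).1)) (Set.Icc a b) := by
      apply ContinuousOn.mul
      · apply ContinuousOn.inv₀
        · exact (Real.continuous_sqrt.comp
            (((hcd.fst).pow 2).add ((hcd.snd).pow 2))).continuousOn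
        · intro u hu; exact Real.sqrt_ne_zero'.mpr (hpos u hu)
      · exact (((hcα.fst).mul (hcd.snd)).sub ((hcα.snd).mul (hcd.fst))).continuousOn
    exact h1.congr fun u _ => hTS2 u
  -- conclude
  have hgs := hsq s hs
  have hgt := hsq t ht
  rcases eq_or_ne (f a) 0 with h0 | h0
  · have h1 : (TS α s).2 = 0 := by
      have := hgs; rw [h0] at this; exact pow_eq_zero_iff (by norm_num) |>.mp this
    have h2 : (TS α t).2 = 0 := by
      have := hgt; rw [h0] at this; exact pow_eq_zero_iff (by norm_num) |>.mp this
    rw [h1, h2]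
  · have hfa : 0 < f a := lt_of_le_of_ne (by positivity) (Ne.symm h0)
    have hne0 : ∀ u ∈ Set.Icc a b, (TS α u).2 ≠ 0 := by
      intro u hu h
      have := hsq u hu
      rw [h] at this
      simp at this
      exact h0 this.symm
    by_contra hne
    have hsq' : (TS α s).2 ^ 2 = (TS α t).2 ^ 2 := by rw [hgs, hgt]
    have hneg : (TS α s).2 = -(TS α t).2 := by
      rcases (Commute.all _ _).sq_eq_sq_iff_eq_or_eq_neg.mp hsq' with h | h
      · exact absurd h hne
      · exact h
    have hsub : Set.uIcc s t ⊆ Set.Icc a b := Set.uIcc_subset_Icc hs ht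
    have hmem : (0 : ℝ) ∈ Set.uIcc ((TS α s).2) ((TS α t).2) := by
      rw [Set.mem_uIcc, hneg]
      rcases lt_trichotomy ((TS α t).2) 0 with h | h | h
      · right; constructor <;> linarith
      · exact absurd h (hne0 t ht)
      · left; constructor <;> linarith
    obtain ⟨u, hu, hu0⟩ := intermediate_value_uIcc (hc.mono hsub) hmem
    exact hne0 u (hsub hu) hu0
end

section
/- Let α : [a,b] → ℝ² be a smooth curve parametrized by arc-length, let θ : [a,b] → ℝ be a smooth function with α'(s) = (cos θ(s), sin θ(s)) for all s, and write TS(α)(s) = (ξ₁(s), ξ₂(s)). Then ξ₁'(s) = θ'(s)·ξ₂(s) − 1 and ξ₂'(s) = −θ'(s)·ξ₁(s) for all s ∈ [a,b]. -/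
/-- For an arc-length parametrized smooth curve `α` with smooth angle function `θ`
(`α'(s) = (cos θ(s), sin θ(s))`), writing `TS(α)(s) = (ξ₁(s), ξ₂(s))`, one has
`ξ₁' = θ'·ξ₂ − 1` and `ξ₂' = −θ'·ξ₁`. -/
theorem stmt13 (α : ℝ → ℝ × ℝ) (θ : ℝ → ℝ)
    (hα : ContDiff ℝ (⊤ : ℕ∞) α) (hθ : ContDiff ℝ (⊤ : ℕ∞) θ)
    (htan : ∀ s, deriv α s = (Real.cos (θ s), Real.sin (θ s))) :
    ∀ s, deriv (fun u => (TSa α u).1) s = deriv θ s * (TSa α s).2 - 1 ∧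
      deriv (fun u => (TSa α u).2) s = -deriv θ s * (TSa α s).1 := by
  intro s
  have hαd : ∀ u, HasDerivAt α (deriv α u) u := fun u =>
    ((hα.differentiable (by simp)) u).hasDerivAt
  have hx : ∀ u, HasDerivAt (fun v => (α v).1) (Real.cos (θ u)) u := by
    intro u
    have := (hαd u).fst
    rwa [htan u] at this
  have hz : ∀ u, HasDerivAt (fun v => (α v).2) (Real.sin (θ u)) u := by
    intro u
    have := (hαd u).snd
    rwa [htan u] at this
  have hθd : HasDerivAt θ (deriv θ s) s := ((hθ.differentiable (by simp)) s).hasDerivAt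
  have hcos : HasDerivAt (fun u => Real.cos (θ u)) (-Real.sin (θ s) * deriv θ s) s :=
    hθd.cos
  have hsin : HasDerivAt (fun u => Real.sin (θ u)) (Real.cos (θ s) * deriv θ s) s :=
    hθd.sin
  set c := Real.cos (θ s) with hc
  set sn := Real.sin (θ s) with hs
  set x := (α s).1
  set z := (α s).2
  set θ' := deriv θ s
  have hr : Real.sin (θ s) ^ 2 + Real.cos (θ s) ^ 2 = 1 := Real.sin_sq_add_cos_sq _
  have hξ1 : (fun u => (TSa α u).1)
      = fun u => -(Real.cos (θ u)) * (α u).1 - Real.sin (θ u) * (α u).2 := by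
    funext u; simp [TSa, htan u]
  have hξ2 : (fun u => (TSa α u).2)
      = fun u => (α u).1 * Real.sin (θ u) - (α u).2 * Real.cos (θ u) := by
    funext u; simp [TSa, htan u]
  have h1 : HasDerivAt (fun u => (TSa α u).1)
      ((-(-sn * θ') * x + -c * c) - ((c * θ') * z + sn * sn)) s := by
    rw [hξ1]
    exact ((hcos.neg.mul (hx s)).sub (hsin.mul (hz s)))
  have h2 : HasDerivAt (fun u => (TSa α u).2)
      ((c * sn + x * (c * θ')) - (sn * c + z * (-sn * θ'))) s := by
    rw [hξ2]
    exact ((hx s).mul hsin).sub ((hz s).mul hcos)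
  constructor
  · rw [h1.deriv]
    simp only [TSa, htan s]
    nlinarith [hr]
  · rw [h2.deriv]
    simp only [TSa, htan s]
    ring
end

section
/- Let w > 0 and let ξ₁, ξ₂ : I → ℝ be differentiable functions on an interval I satisfying the system ξ₁'(s) = w²ξ₂(s)²/(1 + w²(ξ₁(s)² + ξ₂(s)²)) − 1 and ξ₂'(s) = −w²ξ₁(s)ξ₂(s)/(1 + w²(ξ₁(s)² + ξ₂(s)²)) for all s ∈ I. Then the function s ↦ ξ₂(s)/√(1 + w²ξ₁(s)²) is constant on I. -/
/-! Along a solution, `A = 1 + w²ξ₁²` and `D = 1 + w²(ξ₁² + ξ₂²)` satisfy `A + w²ξ₂² = D`, so the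
numerator `ξ₂' A - w²ξ₁ξ₂ξ₁'` of the derivative of `ξ₂ / √A` equals
`-w²ξ₁ξ₂ (A + w²ξ₂² - D) / D = 0`. -/

theorem Convex.eq_of_hasDerivWithinAt_zero {s : Set ℝ} (hs : Convex ℝ s) {f : ℝ → ℝ}
    (hf : ∀ x ∈ s, HasDerivWithinAt f 0 s x) {x y : ℝ} (hx : x ∈ s) (hy : y ∈ s) :
    f x = f y := by
  have h := hs.norm_image_sub_le_of_norm_hasDerivWithin_le (C := 0) hf (by simp) hy hx
  rw [zero_mul, norm_le_zero_iff, sub_eq_zero] at h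
  exact h

theorem HasDerivWithinAt.div_sqrt_one_add_mul_sq {f g : ℝ → ℝ} {f' g' a x : ℝ} {s : Set ℝ}
    (ha : 0 ≤ a) (hf : HasDerivWithinAt f f' s x) (hg : HasDerivWithinAt g g' s x) :
    HasDerivWithinAt (fun t => g t / √(1 + a * f t ^ 2))
      ((g' * (1 + a * f x ^ 2) - a * f x * g x * f') /
        ((1 + a * f x ^ 2) * √(1 + a * f x ^ 2))) s x := by
  have hA : 0 < 1 + a * f x ^ 2 := by positivity
  have hsqrt := (((hf.fun_pow 2).const_mul a).const_add 1).sqrt hA.ne'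
  refine (hg.div hsqrt (Real.sqrt_pos.2 hA).ne').congr_deriv ?_
  have hsq : √(1 + a * f x ^ 2) ^ 2 = 1 + a * f x ^ 2 := Real.sq_sqrt hA.le
  field_simp
  linear_combination (2 * a * f x * g x * f') * hsq

theorem flow_numerator_eq_zero (w x y : ℝ) :
    -(w ^ 2 * x * y / (1 + w ^ 2 * (x ^ 2 + y ^ 2))) * (1 + w ^ 2 * x ^ 2)
      - w ^ 2 * x * y * (w ^ 2 * y ^ 2 / (1 + w ^ 2 * (x ^ 2 + y ^ 2)) - 1) = 0 := by
  have hD : 1 + w ^ 2 * (x ^ 2 + y ^ 2) ≠ 0 := by positivity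
  field_simp
  ring

theorem stmt14_general (w : ℝ) (I : Set ℝ) (hI : I.OrdConnected)
    (ξ₁ ξ₂ : ℝ → ℝ)
    (h1 : ∀ s ∈ I, HasDerivWithinAt ξ₁
      (w ^ 2 * ξ₂ s ^ 2 / (1 + w ^ 2 * (ξ₁ s ^ 2 + ξ₂ s ^ 2)) - 1) I s)
    (h2 : ∀ s ∈ I, HasDerivWithinAt ξ₂
      (-(w ^ 2 * ξ₁ s * ξ₂ s / (1 + w ^ 2 * (ξ₁ s ^ 2 + ξ₂ s ^ 2)))) I s) :
    ∀ s ∈ I, ∀ t ∈ I,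
      ξ₂ s / Real.sqrt (1 + w ^ 2 * ξ₁ s ^ 2)
        = ξ₂ t / Real.sqrt (1 + w ^ 2 * ξ₁ t ^ 2) := by
  intro s hs t ht
  refine hI.convex.eq_of_hasDerivWithinAt_zero
    (f := fun u => ξ₂ u / √(1 + w ^ 2 * ξ₁ u ^ 2)) (fun x hx => ?_) hs ht
  refine ((h1 x hx).div_sqrt_one_add_mul_sq (sq_nonneg w) (h2 x hx)).congr_deriv ?_
  rw [flow_numerator_eq_zero, zero_div]

/-- If `ξ₁, ξ₂` are differentiable on an interval `I` and satisfy the system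
`ξ₁' = w²ξ₂²/(1 + w²(ξ₁² + ξ₂²)) − 1`, `ξ₂' = −w²ξ₁ξ₂/(1 + w²(ξ₁² + ξ₂²))` on `I`
(with `w > 0` fixed), then the function `s ↦ ξ₂(s)/√(1 + w²ξ₁(s)²)` is constant on `I`. -/
theorem stmt14 (w : ℝ) (hw : 0 < w) (I : Set ℝ) (hI : I.OrdConnected)
    (ξ₁ ξ₂ : ℝ → ℝ)
    (h1 : ∀ s ∈ I, HasDerivWithinAt ξ₁
      (w ^ 2 * ξ₂ s ^ 2 / (1 + w ^ 2 * (ξ₁ s ^ 2 + ξ₂ s ^ 2)) - 1) I s)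
    (h2 : ∀ s ∈ I, HasDerivWithinAt ξ₂
      (-(w ^ 2 * ξ₁ s * ξ₂ s / (1 + w ^ 2 * (ξ₁ s ^ 2 + ξ₂ s ^ 2)))) I s) :
    ∀ s ∈ I, ∀ t ∈ I,
      ξ₂ s / Real.sqrt (1 + w ^ 2 * ξ₁ s ^ 2)
        = ξ₂ t / Real.sqrt (1 + w ^ 2 * ξ₁ t ^ 2) :=
  stmt14_general w I hI ξ₁ ξ₂ h1 h2
end

section
/- Let w > 0, let α : I → ℝ² be a smooth curve parametrized by arc-length on an interval I, let θ : I → ℝ be a smooth function with α'(s) = (cos θ(s), sin θ(s)) for all s, and write TS(α)(s) = (ξ₁(s), ξ₂(s)). Assume the minimality equation θ'(s) = w²ξ₂(s)/(1 + w²(ξ₁(s)² + ξ₂(s)²)) holds for all s ∈ I. Then either ξ₂(s) = 0 for all s (so TS(α) lies in the x-axis), or there exists a constant M ≠ 0 such that ξ₂(s)²/M² − w²ξ₁(s)² = 1 and ξ₂(s) has the same sign as M for all s (so TS(α) lies in one branch of the hyperbola y²/M² − w²x² = 1). -/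
noncomputable def Xi1 (α : ℝ → ℝ × ℝ) (θ : ℝ → ℝ) (s : ℝ) : ℝ :=
  -Real.cos (θ s) * (α s).1 - Real.sin (θ s) * (α s).2

noncomputable def Xi2 (α : ℝ → ℝ × ℝ) (θ : ℝ → ℝ) (s : ℝ) : ℝ :=
  (α s).1 * Real.sin (θ s) - (α s).2 * Real.cos (θ s)

lemma TSa_eq (α : ℝ → ℝ × ℝ) (θ : ℝ → ℝ)
    (htan : ∀ s, deriv α s = (Real.cos (θ s), Real.sin (θ s))) (s : ℝ) :
    TSa α s = (Xi1 α θ s, Xi2 α θ s) := by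
  simp [TSa, htan s, Xi1, Xi2]

lemma xi_deriv (α : ℝ → ℝ × ℝ) (θ : ℝ → ℝ)
    (hα : ContDiff ℝ (⊤ : ℕ∞) α) (hθ : ContDiff ℝ (⊤ : ℕ∞) θ)
    (htan : ∀ s, deriv α s = (Real.cos (θ s), Real.sin (θ s))) (s : ℝ) :
    HasDerivAt (Xi1 α θ) (deriv θ s * Xi2 α θ s - 1) s ∧
    HasDerivAt (Xi2 α θ) (-(deriv θ s) * Xi1 α θ s) s := by
  have hx : HasDerivAt (fun t => (α t).1) (Real.cos (θ s)) s := by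
    exact (hasFDerivAt_fst.comp_hasDerivAt s ((hα.differentiable (by simp) s).hasDerivAt)).congr_deriv (by simp [htan s])
  have hz : HasDerivAt (fun t => (α t).2) (Real.sin (θ s)) s := by
    exact (hasFDerivAt_snd.comp_hasDerivAt s ((hα.differentiable (by simp) s).hasDerivAt)).congr_deriv (by simp [htan s])
  have hθd : HasDerivAt θ (deriv θ s) s := (hθ.differentiable (by simp) s).hasDerivAt
  constructor
  · have h := ((hθd.cos.fun_neg).mul hx).sub (hθd.sin.mul hz)
    have he : HasDerivAt (fun t => -Real.cos (θ t) * (α t).1 - Real.sin (θ t) * (α t).2)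
        (deriv θ s * Xi2 α θ s - 1) s := by
      refine h.congr_deriv ?_
      have h1 := Real.sin_sq_add_cos_sq (θ s)
      unfold Xi2
      nlinarith [h1]
    exact he
  · have h := (hx.mul hθd.sin).sub (hz.mul hθd.cos)
    have he : HasDerivAt (fun t => (α t).1 * Real.sin (θ t) - (α t).2 * Real.cos (θ t))
        (-(deriv θ s) * Xi1 α θ s) s := by
      refine h.congr_deriv ?_
      unfold Xi1
      ring
    exact he

/-- Let `α` be an arc-length parametrized smooth curve with smooth angle function `θ`,
write `TS(α) = (ξ₁, ξ₂)`, and suppose the minimality equation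
`θ' = w²ξ₂/(1 + w²(ξ₁² + ξ₂²))` holds on an interval `I` (with `w > 0`). Then either
`ξ₂ ≡ 0` on `I` (the TreadmillSled lies in the `x`-axis), or there is a constant `M ≠ 0`
with `ξ₂²/M² − w²ξ₁² = 1` and `ξ₂` of the same sign as `M` on `I` (the TreadmillSled lies
in one branch of the hyperbola `y²/M² − w²x² = 1`). -/
theorem stmt15 (w : ℝ) (hw : 0 < w) (I : Set ℝ) (hI : I.OrdConnected)
    (α : ℝ → ℝ × ℝ) (θ : ℝ → ℝ)
    (hα : ContDiff ℝ (⊤ : ℕ∞) α) (hθ : ContDiff ℝ (⊤ : ℕ∞) θ)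
    (htan : ∀ s, deriv α s = (Real.cos (θ s), Real.sin (θ s)))
    (hmin : ∀ s ∈ I, deriv θ s =
      w ^ 2 * (TSa α s).2 / (1 + w ^ 2 * ((TSa α s).1 ^ 2 + (TSa α s).2 ^ 2))) :
    (∀ s ∈ I, (TSa α s).2 = 0) ∨
    ∃ M : ℝ, M ≠ 0 ∧ ∀ s ∈ I,
      (TSa α s).2 ^ 2 / M ^ 2 - w ^ 2 * (TSa α s).1 ^ 2 = 1 ∧ 0 < M * (TSa α s).2 := by
  by_cases hz0 : ∀ s ∈ I, (TSa α s).2 = 0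
  · exact Or.inl hz0
  right
  push_neg at hz0
  obtain ⟨s₀, hs₀I, hs₀⟩ := hz0
  have hTS : ∀ s, TSa α s = (Xi1 α θ s, Xi2 α θ s) := TSa_eq α θ htan
  have hs₀ : Xi2 α θ s₀ ≠ 0 := by rw [hTS s₀] at hs₀; exact hs₀
  -- positivity of denominators
  have hD : ∀ s, 0 < 1 + w ^ 2 * Xi1 α θ s ^ 2 := fun s => by positivity
  -- the conserved quantity
  set F : ℝ → ℝ := fun s => Xi2 α θ s ^ 2 / (1 + w ^ 2 * Xi1 α θ s ^ 2) with hF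
  have hFd : ∀ s, HasDerivAt F
      ((2 * Xi2 α θ s * (-(deriv θ s) * Xi1 α θ s) * (1 + w ^ 2 * Xi1 α θ s ^ 2)
        - Xi2 α θ s ^ 2 * (w ^ 2 * (2 * Xi1 α θ s * (deriv θ s * Xi2 α θ s - 1))))
        / (1 + w ^ 2 * Xi1 α θ s ^ 2) ^ 2) s := by
    intro s
    obtain ⟨h1, h2⟩ := xi_deriv α θ hα hθ htan s
    have hnum : HasDerivAt (fun t => Xi2 α θ t ^ 2)
        (2 * Xi2 α θ s * (-(deriv θ s) * Xi1 α θ s)) s := by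
      simpa using (h2.fun_pow 2)
    have hden : HasDerivAt (fun t => 1 + w ^ 2 * Xi1 α θ t ^ 2)
        (w ^ 2 * (2 * Xi1 α θ s * (deriv θ s * Xi2 α θ s - 1))) s := by
      have := ((h1.pow 2).const_mul (w ^ 2)).const_add 1
      simpa using this
    exact hnum.div hden (hD s).ne'
  have hF0 : ∀ s ∈ I, HasDerivAt F 0 s := by
    intro s hs
    have h := hFd s
    have hm := hmin s hs
    rw [hTS s] at hm
    simp only at hm
    have hQ : 0 < 1 + w ^ 2 * (Xi1 α θ s ^ 2 + Xi2 α θ s ^ 2) := by positivity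
    have hkey : deriv θ s * (1 + w ^ 2 * (Xi1 α θ s ^ 2 + Xi2 α θ s ^ 2))
        = w ^ 2 * Xi2 α θ s := by
      field_simp at hm; linarith [hm]
    have hz : (2 * Xi2 α θ s * (-(deriv θ s) * Xi1 α θ s) * (1 + w ^ 2 * Xi1 α θ s ^ 2)
        - Xi2 α θ s ^ 2 * (w ^ 2 * (2 * Xi1 α θ s * (deriv θ s * Xi2 α θ s - 1))))
        / (1 + w ^ 2 * Xi1 α θ s ^ 2) ^ 2 = 0 := by
      rw [div_eq_zero_iff]
      left
      linear_combination (-2 * Xi1 α θ s * Xi2 α θ s) * hkey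
    rwa [hz] at h
  -- F is constant on I
  have hFconst : ∀ s ∈ I, F s = F s₀ := by
    have key : ∀ a ∈ I, ∀ b ∈ I, a ≤ b → F b = F a := by
      intro a ha b hb hab
      have hsub : Set.Icc a b ⊆ I := hI.out ha hb
      have hcont : ContinuousOn F (Set.Icc a b) :=
        fun t _ => ((hFd t).differentiableAt.continuousAt).continuousWithinAt
      have hder : ∀ t ∈ Set.Ico a b, HasDerivWithinAt F 0 (Set.Ici t) t :=
        fun t ht => (hF0 t (hsub (Set.Ico_subset_Icc_self ht))).hasDerivWithinAt
      exact constant_of_has_deriv_right_zero hcont hder b (Set.right_mem_Icc.2 hab)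
    intro s hs
    rcases le_total s s₀ with h | h
    · exact (key s hs s₀ hs₀I h).symm
    · exact key s₀ hs₀I s hs h
  -- the constant is positive
  have hc : 0 < F s₀ := by
    have := hD s₀
    have h2 : 0 < Xi2 α θ s₀ ^ 2 := by positivity
    exact div_pos h2 this
  -- squares on I
  have hsq : ∀ s ∈ I, Xi2 α θ s ^ 2 = F s₀ * (1 + w ^ 2 * Xi1 α θ s ^ 2) := by
    intro s hs
    have h2 : Xi2 α θ s ^ 2 / (1 + w ^ 2 * Xi1 α θ s ^ 2) = F s₀ := hFconst s hs
    rwa [div_eq_iff (hD s).ne'] at h2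
  have hne : ∀ s ∈ I, Xi2 α θ s ≠ 0 := by
    intro s hs h0
    have := hsq s hs
    rw [h0] at this
    nlinarith [hD s, hc]
  -- the constant M
  refine ⟨Xi2 α θ s₀ / Real.sqrt (1 + w ^ 2 * Xi1 α θ s₀ ^ 2), ?_, ?_⟩
  · have : Real.sqrt (1 + w ^ 2 * Xi1 α θ s₀ ^ 2) ≠ 0 :=
      (Real.sqrt_pos.2 (hD s₀)).ne'
    exact div_ne_zero hs₀ this
  intro s hs
  have hsqrtpos : 0 < Real.sqrt (1 + w ^ 2 * Xi1 α θ s₀ ^ 2) := Real.sqrt_pos.2 (hD s₀)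
  have hM2 : (Xi2 α θ s₀ / Real.sqrt (1 + w ^ 2 * Xi1 α θ s₀ ^ 2)) ^ 2 = F s₀ := by
    rw [div_pow, Real.sq_sqrt (hD s₀).le]
  constructor
  · rw [hTS s]
    simp only
    rw [hM2]
    have h1 := hsq s hs
    have h2 := hc
    field_simp
    linarith [h1]
  · rw [hTS s]
    simp only
    -- sign constancy via IVT
    have hsign : 0 < Xi2 α θ s₀ * Xi2 α θ s := by
      by_contra hcon
      push_neg at hcon
      have hneq : Xi2 α θ s ≠ 0 := hne s hs
      have hlt : Xi2 α θ s₀ * Xi2 α θ s < 0 :=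
        lt_of_le_of_ne hcon (mul_ne_zero hs₀ hneq)
      have hcontXi : Continuous (Xi2 α θ) := by
        unfold Xi2
        exact (hα.continuous.fst.mul (Real.continuous_sin.comp hθ.continuous)).sub
          (hα.continuous.snd.mul (Real.continuous_cos.comp hθ.continuous))
      have hmem : (0 : ℝ) ∈ Set.uIcc (Xi2 α θ s₀) (Xi2 α θ s) := by
        rcases mul_neg_iff.1 hlt with ⟨h1, h2⟩ | ⟨h1, h2⟩
        · exact Set.mem_uIcc.2 (Or.inr ⟨h2.le, h1.le⟩)
        · exact Set.mem_uIcc.2 (Or.inl ⟨h1.le, h2.le⟩)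
      obtain ⟨t, ht, ht0⟩ := intermediate_value_uIcc (hcontXi.continuousOn
        (s := Set.uIcc s₀ s)) hmem
      have htI : t ∈ I := hI.uIcc_subset hs₀I hs ht
      exact hne t htI ht0
    have : 0 < Xi2 α θ s₀ * Xi2 α θ s / Real.sqrt (1 + w ^ 2 * Xi1 α θ s₀ ^ 2) :=
      div_pos hsign hsqrtpos
    calc (0:ℝ) < Xi2 α θ s₀ * Xi2 α θ s / Real.sqrt (1 + w ^ 2 * Xi1 α θ s₀ ^ 2) := this
      _ = Xi2 α θ s₀ / Real.sqrt (1 + w ^ 2 * Xi1 α θ s₀ ^ 2) * Xi2 α θ s := by ring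
end

section
/- Let α : I → ℝ² be a smooth curve parametrized by arc-length on an interval I and let c ∈ ℝ. If TS(α)(s) = (c − s, 0) for all s ∈ I (i.e., the TreadmillSled traverses the x-axis), then α is a line through the origin: there exists a unit vector v ∈ ℝ² such that α(s) = (s − c)·v for all s ∈ I. -/
open Set

private lemma unit_eq16 {a b : ℝ × ℝ} (ha : a.1 ^ 2 + a.2 ^ 2 = 1) (hb : b.1 ^ 2 + b.2 ^ 2 = 1)
    (hab : a.1 * b.1 + a.2 * b.2 = 1) : a = b := by
  have h1 : a.1 = b.1 := by nlinarith [sq_nonneg (a.1 - b.1), sq_nonneg (a.2 - b.2)]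
  have h2 : a.2 = b.2 := by nlinarith [sq_nonneg (a.1 - b.1), sq_nonneg (a.2 - b.2)]
  exact Prod.ext h1 h2

private lemma hasDerivAt_dot16 (α : ℝ → ℝ × ℝ) (hα : Differentiable ℝ α) (b : ℝ × ℝ) (u : ℝ) :
    HasDerivAt (fun u => (α u).1 * b.1 + (α u).2 * b.2)
      ((deriv α u).1 * b.1 + (deriv α u).2 * b.2) u := by
  have h := (hα u).hasDerivAt
  have h1 : HasDerivAt (fun u => (α u).1) (deriv α u).1 u :=
    (ContinuousLinearMap.fst ℝ ℝ ℝ).hasFDerivAt.comp_hasDerivAt u h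
  have h2 : HasDerivAt (fun u => (α u).2) (deriv α u).2 u :=
    (ContinuousLinearMap.snd ℝ ℝ ℝ).hasFDerivAt.comp_hasDerivAt u h
  exact (h1.mul_const b.1).add (h2.mul_const b.2)

/-- Pointwise: the curve is radial, `α s = (s - c) • α' s`. -/
private lemma point16 (α : ℝ → ℝ × ℝ) (c s : ℝ)
    (hu : (deriv α s).1 ^ 2 + (deriv α s).2 ^ 2 = 1)
    (hT : TSa α s = (c - s, 0)) :
    α s = (s - c) • deriv α s := by
  have h1 : -(deriv α s).1 * (α s).1 - (deriv α s).2 * (α s).2 = c - s :=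
    congrArg Prod.fst hT
  have h2 : (α s).1 * (deriv α s).2 - (α s).2 * (deriv α s).1 = 0 :=
    congrArg Prod.snd hT
  have e1 : (α s).1 = (s - c) * (deriv α s).1 := by
    linear_combination (-(deriv α s).1) * h1 + (deriv α s).2 * h2 - (α s).1 * hu
  have e2 : (α s).2 = (s - c) * (deriv α s).2 := by
    linear_combination (-(deriv α s).2) * h1 - (deriv α s).1 * h2 - (α s).2 * hu
  exact Prod.ext (by simpa using e1) (by simpa using e2)

/-- The bridge lemma: if the dot product `α · b` is squeezed at the endpoints, then
the derivative equals `b` on the whole segment. -/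
private lemma bridge16 (α : ℝ → ℝ × ℝ) (hα : Differentiable ℝ α) (c : ℝ) (b : ℝ × ℝ)
    (hb : b.1 ^ 2 + b.2 ^ 2 = 1) (s t : ℝ) (hst : s < t)
    (hd : ∀ u ∈ Icc s t, (deriv α u).1 ^ 2 + (deriv α u).2 ^ 2 = 1)
    (hs0 : (α s).1 * b.1 + (α s).2 * b.2 ≤ s - c)
    (ht0 : t - c ≤ (α t).1 * b.1 + (α t).2 * b.2) :
    ∀ u ∈ Icc s t, deriv α u = b := by
  set φ : ℝ → ℝ := fun u => (α u).1 * b.1 + (α u).2 * b.2 with hφ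
  set ψ : ℝ → ℝ := fun u => φ u - (u - c) with hψ
  have hψd : ∀ u : ℝ, HasDerivAt ψ ((deriv α u).1 * b.1 + (deriv α u).2 * b.2 - 1) u := by
    intro u
    exact (hasDerivAt_dot16 α hα b u).sub ((hasDerivAt_id u).sub_const c)
  have hanti : AntitoneOn ψ (Icc s t) := by
    apply antitoneOn_of_deriv_nonpos (convex_Icc s t)
    · exact (Continuous.continuousOn (by
        exact ((hα.continuous.fst.mul continuous_const).add
          (hα.continuous.snd.mul continuous_const)).sub
          (continuous_id.sub continuous_const)))
    · intro x hx
      exact ((hψd x).differentiableAt).differentiableWithinAt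
    · intro x hx
      rw [interior_Icc] at hx
      rw [(hψd x).deriv]
      have hdx := hd x ⟨le_of_lt hx.1, le_of_lt hx.2⟩
      nlinarith [sq_nonneg ((deriv α x).1 - b.1), sq_nonneg ((deriv α x).2 - b.2)]
  have hψs : ψ s ≤ 0 := by simp only [hψ, hφ]; linarith
  have hψt : 0 ≤ ψ t := by simp only [hψ, hφ]; linarith
  have hzero : ∀ u ∈ Icc s t, ψ u = 0 := by
    intro u hu
    have h1 := hanti (left_mem_Icc.2 hst.le) hu hu.1
    have h2 := hanti hu (right_mem_Icc.2 hst.le) hu.2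
    linarith
  intro u hu
  have h1 : HasDerivWithinAt φ ((deriv α u).1 * b.1 + (deriv α u).2 * b.2) (Icc s t) u :=
    (hasDerivAt_dot16 α hα b u).hasDerivWithinAt
  have h2 : HasDerivWithinAt φ 1 (Icc s t) u := by
    have h3 : HasDerivWithinAt (fun u : ℝ => u - c) 1 (Icc s t) u :=
      ((hasDerivAt_id u).sub_const c).hasDerivWithinAt
    apply h3.congr
    · intro y hy
      have := hzero y hy
      simp only [hψ] at this
      linarith
    · have := hzero u hu
      simp only [hψ] at this
      linarith
  have heq : (deriv α u).1 * b.1 + (deriv α u).2 * b.2 = 1 :=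
    (uniqueDiffOn_Icc hst u hu).eq_deriv _ h1 h2
  exact unit_eq16 (hd u hu) hb heq

/-- If the TreadmillSled of an arc-length parametrized smooth curve `α` on an interval `I`
traverses the `x`-axis, `TS(α)(s) = (c − s, 0)`, then `α` is a line through the origin:
`α(s) = (s − c)·v` for some unit vector `v`. -/
theorem stmt16 (I : Set ℝ) (hI : I.OrdConnected) (c : ℝ) (α : ℝ → ℝ × ℝ)
    (hα : ContDiff ℝ (⊤ : ℕ∞) α)
    (hunit : ∀ s ∈ I, (deriv α s).1 ^ 2 + (deriv α s).2 ^ 2 = 1)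
    (hTS : ∀ s ∈ I, TSa α s = (c - s, 0)) :
    ∃ v : ℝ × ℝ, v.1 ^ 2 + v.2 ^ 2 = 1 ∧ ∀ s ∈ I, α s = (s - c) • v := by
  rcases Set.eq_empty_or_nonempty I with hIe | ⟨t₀, ht₀⟩
  · exact ⟨(1, 0), by norm_num, fun s hs => by simp [hIe] at hs⟩
  have hdiff : Differentiable ℝ α := hα.differentiable (by simp)
  have hpt : ∀ s ∈ I, α s = (s - c) • deriv α s := fun s hs =>
    point16 α c s (hunit s hs) (hTS s hs)
  -- case lemma 1 : c ≤ s < t, both in I → deriv α s = deriv α t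
  have case1 : ∀ s ∈ I, ∀ t ∈ I, c ≤ s → s < t → deriv α s = deriv α t := by
    intro s hs t ht hcs hst
    have hIcc : Icc s t ⊆ I := hI.out hs ht
    have hd : ∀ u ∈ Icc s t, (deriv α u).1 ^ 2 + (deriv α u).2 ^ 2 = 1 :=
      fun u hu => hunit u (hIcc hu)
    have hb := hunit t ht
    have hps := hpt s hs
    have hpt' := hpt t ht
    have hs1 : (α s).1 = (s - c) * (deriv α s).1 := by rw [hps]; simp
    have hs2 : (α s).2 = (s - c) * (deriv α s).2 := by rw [hps]; simp
    have ht1 : (α t).1 = (t - c) * (deriv α t).1 := by rw [hpt']; simp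
    have ht2 : (α t).2 = (t - c) * (deriv α t).2 := by rw [hpt']; simp
    have hCS : (deriv α s).1 * (deriv α t).1 + (deriv α s).2 * (deriv α t).2 ≤ 1 := by
      nlinarith [sq_nonneg ((deriv α s).1 - (deriv α t).1),
        sq_nonneg ((deriv α s).2 - (deriv α t).2), hunit s hs]
    have hkey := bridge16 α hdiff c (deriv α t) hb s t hst hd
      (by rw [hs1, hs2]; nlinarith)
      (by rw [ht1, ht2]; nlinarith)
    rw [hkey s (left_mem_Icc.2 hst.le), hkey t (right_mem_Icc.2 hst.le)]
  have case2 : ∀ s ∈ I, ∀ t ∈ I, t ≤ c → s < t → deriv α s = deriv α t := by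
    intro s hs t ht htc hst
    have hIcc : Icc s t ⊆ I := hI.out hs ht
    have hd : ∀ u ∈ Icc s t, (deriv α u).1 ^ 2 + (deriv α u).2 ^ 2 = 1 :=
      fun u hu => hunit u (hIcc hu)
    have hb := hunit s hs
    have hps := hpt s hs
    have hpt' := hpt t ht
    have hs1 : (α s).1 = (s - c) * (deriv α s).1 := by rw [hps]; simp
    have hs2 : (α s).2 = (s - c) * (deriv α s).2 := by rw [hps]; simp
    have ht1 : (α t).1 = (t - c) * (deriv α t).1 := by rw [hpt']; simp
    have ht2 : (α t).2 = (t - c) * (deriv α t).2 := by rw [hpt']; simp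
    have hCS : (deriv α t).1 * (deriv α s).1 + (deriv α t).2 * (deriv α s).2 ≤ 1 := by
      nlinarith [sq_nonneg ((deriv α s).1 - (deriv α t).1),
        sq_nonneg ((deriv α s).2 - (deriv α t).2), hunit t ht]
    have hkey := bridge16 α hdiff c (deriv α s) hb s t hst hd
      (by rw [hs1, hs2]; nlinarith)
      (by rw [ht1, ht2]; nlinarith)
    rw [hkey s (left_mem_Icc.2 hst.le), hkey t (right_mem_Icc.2 hst.le)]
  -- arbitrary pair
  have pair : ∀ s ∈ I, ∀ t ∈ I, s < t → deriv α s = deriv α t := by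
    intro s hs t ht hst
    rcases le_or_gt c s with hcs | hsc
    · exact case1 s hs t ht hcs hst
    rcases le_or_gt t c with htc | hct
    · exact case2 s hs t ht htc hst
    · have hcI : c ∈ I := hI.out hs ht ⟨hsc.le, hct.le⟩
      rw [case2 s hs c hcI le_rfl hsc, case1 c hcI t ht le_rfl hct]
  have key : ∀ s ∈ I, deriv α s = deriv α t₀ := by
    intro s hs
    rcases lt_trichotomy s t₀ with h | h | h
    · exact pair s hs t₀ ht₀ h
    · rw [h]
    · exact (pair t₀ ht₀ s hs h).symm
  refine ⟨deriv α t₀, hunit t₀ ht₀, fun s hs => ?_⟩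
  rw [← key s hs]
  exact hpt s hs
end

section
/- Let w > 0, let α = (x, z) : I → ℝ² be a smooth curve parametrized by arc-length, write TS(α)(s) = (ξ₁(s), ξ₂(s)), and let φ : I × ℝ → ℝ³ be the helicoidal surface φ(s,t) = (x(s)cos(wt) + z(s)sin(wt), t, −x(s)sin(wt) + z(s)cos(wt)). Then the coefficients of the first fundamental form of φ are E = ⟨∂φ/∂s, ∂φ/∂s⟩ = 1, F = ⟨∂φ/∂s, ∂φ/∂t⟩ = −w·ξ₂(s), and G = ⟨∂φ/∂t, ∂φ/∂t⟩ = 1 + w²(ξ₁(s)² + ξ₂(s)²) at every (s,t). -/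
/-- Euclidean inner product on `ℝ³ = ℝ × ℝ × ℝ`. -/
def dot3 (p q : ℝ × ℝ × ℝ) : ℝ := p.1 * q.1 + p.2.1 * q.2.1 + p.2.2 * q.2.2

/-- First fundamental form of the helicoidal surface
`φ(s,t) = (x(s)cos(wt) + z(s)sin(wt), t, −x(s)sin(wt) + z(s)cos(wt))` generated by an
arc-length parametrized profile curve `α = (x, z)` with TreadmillSled `(ξ₁, ξ₂)`:
`E = ⟨φ_s, φ_s⟩ = 1`, `F = ⟨φ_s, φ_t⟩ = −w·ξ₂`, `G = ⟨φ_t, φ_t⟩ = 1 + w²(ξ₁² + ξ₂²)`. -/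
theorem stmt17 (w : ℝ) (hw : 0 < w) (x z ξ₁ ξ₂ : ℝ → ℝ) (φ : ℝ → ℝ → ℝ × ℝ × ℝ)
    (hx : ContDiff ℝ (⊤ : ℕ∞) x) (hz : ContDiff ℝ (⊤ : ℕ∞) z)
    (hunit : ∀ s, deriv x s ^ 2 + deriv z s ^ 2 = 1)
    (hξ₁ : ∀ s, ξ₁ s = -(deriv x s * x s) - deriv z s * z s)
    (hξ₂ : ∀ s, ξ₂ s = x s * deriv z s - z s * deriv x s)
    (hφ : ∀ s t, φ s t = (x s * Real.cos (w * t) + z s * Real.sin (w * t), t,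
        -(x s) * Real.sin (w * t) + z s * Real.cos (w * t))) :
    ∀ s t : ℝ,
      dot3 (deriv (fun u => φ u t) s) (deriv (fun u => φ u t) s) = 1 ∧
      dot3 (deriv (fun u => φ u t) s) (deriv (fun v => φ s v) t) = -w * ξ₂ s ∧
      dot3 (deriv (fun v => φ s v) t) (deriv (fun v => φ s v) t)
        = 1 + w ^ 2 * (ξ₁ s ^ 2 + ξ₂ s ^ 2) := by
  intro s t
  set c := Real.cos (w * t) with hc
  set sn := Real.sin (w * t) with hsn
  have hxs : HasDerivAt x (deriv x s) s :=
    ((hx.differentiable (by simp)) s).hasDerivAt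
  have hzs : HasDerivAt z (deriv z s) s :=
    ((hz.differentiable (by simp)) s).hasDerivAt
  -- derivative in s
  have hDs : HasDerivAt (fun u => φ u t)
      (deriv x s * c + deriv z s * sn, (0 : ℝ),
        -(deriv x s) * sn + deriv z s * c) s := by
    have heq : (fun u => φ u t) = fun u =>
        ((x u * c + z u * sn, (t, -(x u) * sn + z u * c)) : ℝ × ℝ × ℝ) := by
      funext u; rw [hφ u t]
    rw [heq]
    exact HasDerivAt.prodMk ((hxs.mul_const c).add (hzs.mul_const sn))
      (HasDerivAt.prodMk (hasDerivAt_const s t)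
        (((hxs.neg).mul_const sn).add (hzs.mul_const c)))
  -- derivative in t
  have hwv : HasDerivAt (fun v : ℝ => w * v) w t := by
    simpa using (hasDerivAt_id t).const_mul w
  have hcos : HasDerivAt (fun v : ℝ => Real.cos (w * v)) (-sn * w) t := by
    simpa [hsn, Function.comp_def] using (Real.hasDerivAt_cos (w * t)).comp t hwv
  have hsin : HasDerivAt (fun v : ℝ => Real.sin (w * v)) (c * w) t := by
    simpa [hc, Function.comp_def] using (Real.hasDerivAt_sin (w * t)).comp t hwv
  have hDt : HasDerivAt (fun v => φ s v)
      (x s * (-sn * w) + z s * (c * w), (1 : ℝ),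
        -(x s) * (c * w) + z s * (-sn * w)) t := by
    have heq : (fun v => φ s v) = fun v =>
        ((x s * Real.cos (w * v) + z s * Real.sin (w * v),
          (v, -(x s) * Real.sin (w * v) + z s * Real.cos (w * v))) : ℝ × ℝ × ℝ) := by
      funext v; rw [hφ s v]
    rw [heq]
    exact HasDerivAt.prodMk ((hcos.const_mul (x s)).add (hsin.const_mul (z s)))
      (HasDerivAt.prodMk (hasDerivAt_id t)
        ((hsin.const_mul (-(x s))).add (hcos.const_mul (z s))))
  rw [hDs.deriv, hDt.deriv]
  have hpy : c ^ 2 + sn ^ 2 = 1 := by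
    rw [hc, hsn]; exact Real.cos_sq_add_sin_sq (w * t)
  have hu := hunit s
  refine ⟨?_, ?_, ?_⟩
  · simp only [dot3]; nlinarith [hu, hpy]
  · simp only [dot3, hξ₂ s]
    linear_combination (w * (deriv x s * z s - x s * deriv z s)) * hpy
  · simp only [dot3, hξ₁ s, hξ₂ s]; nlinarith [hu, hpy, sq_nonneg (x s), sq_nonneg (z s)]
end

section
/- Let w > 0, let α = (x, z) : I → ℝ² be a smooth curve parametrized by arc-length, let θ : I → ℝ be a smooth function with α'(s) = (cos θ(s), sin θ(s)), write TS(α)(s) = (ξ₁(s), ξ₂(s)), and let φ(s,t) = (x(s)cos(wt) + z(s)sin(wt), t, −x(s)sin(wt) + z(s)cos(wt)). Then the vector ν(s,t) = (1/√(1 + w²ξ₁(s)²))·(sin(wt − θ(s)), −w·ξ₁(s), cos(wt − θ(s))) satisfies |ν(s,t)| = 1, ⟨ν(s,t), ∂φ/∂s(s,t)⟩ = 0, and ⟨ν(s,t), ∂φ/∂t(s,t)⟩ = 0 at every (s,t); that is, ν is a unit normal (Gauss map) of the helicoidal immersion φ. -/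
/-- For the helicoidal surface
`φ(s,t) = (x(s)cos(wt) + z(s)sin(wt), t, −x(s)sin(wt) + z(s)cos(wt))` generated by an
arc-length parametrized profile curve `α = (x, z)` with angle function `θ` and
TreadmillSled `(ξ₁, ξ₂)`, the vector
`ν(s,t) = (1/√(1 + w²ξ₁²))·(sin(wt − θ), −wξ₁, cos(wt − θ))` is a unit normal (Gauss map):
`|ν| = 1`, `⟨ν, φ_s⟩ = 0` and `⟨ν, φ_t⟩ = 0`. -/
theorem stmt18 (w : ℝ) (hw : 0 < w) (x z θ ξ₁ ξ₂ : ℝ → ℝ)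
    (φ ν : ℝ → ℝ → ℝ × ℝ × ℝ)
    (hx : ContDiff ℝ (⊤ : ℕ∞) x) (hz : ContDiff ℝ (⊤ : ℕ∞) z) (hθ : ContDiff ℝ (⊤ : ℕ∞) θ)
    (htan : ∀ s, deriv x s = Real.cos (θ s) ∧ deriv z s = Real.sin (θ s))
    (hξ₁ : ∀ s, ξ₁ s = -(deriv x s * x s) - deriv z s * z s)
    (hξ₂ : ∀ s, ξ₂ s = x s * deriv z s - z s * deriv x s)
    (hφ : ∀ s t, φ s t = (x s * Real.cos (w * t) + z s * Real.sin (w * t), t,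
        -(x s) * Real.sin (w * t) + z s * Real.cos (w * t)))
    (hν : ∀ s t, ν s t = (Real.sqrt (1 + w ^ 2 * ξ₁ s ^ 2))⁻¹ •
        ((Real.sin (w * t - θ s), -(w * ξ₁ s), Real.cos (w * t - θ s)) : ℝ × ℝ × ℝ)) :
    ∀ s t : ℝ,
      dot3 (ν s t) (ν s t) = 1 ∧
      dot3 (ν s t) (deriv (fun u => φ u t) s) = 0 ∧
      dot3 (ν s t) (deriv (fun v => φ s v) t) = 0 := by

  intro s t
  have hA : (0:ℝ) < 1 + w ^ 2 * ξ₁ s ^ 2 := by positivity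
  have hsq : Real.sqrt (1 + w ^ 2 * ξ₁ s ^ 2) ^ 2 = 1 + w ^ 2 * ξ₁ s ^ 2 :=
    Real.sq_sqrt hA.le
  have hs0 : Real.sqrt (1 + w ^ 2 * ξ₁ s ^ 2) ≠ 0 := by positivity
  have hxd : HasDerivAt x (Real.cos (θ s)) s := by
    have h := (hx.differentiable (by simp) s).hasDerivAt
    rwa [(htan s).1] at h
  have hzd : HasDerivAt z (Real.sin (θ s)) s := by
    have h := (hz.differentiable (by simp) s).hasDerivAt
    rwa [(htan s).2] at h
  -- derivative in s
  have hφs : deriv (fun u => φ u t) s =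
      (Real.cos (θ s) * Real.cos (w * t) + Real.sin (θ s) * Real.sin (w * t), 0,
       -(Real.cos (θ s)) * Real.sin (w * t) + Real.sin (θ s) * Real.cos (w * t)) := by
    have h1 : HasDerivAt (fun u => x u * Real.cos (w * t) + z u * Real.sin (w * t))
        (Real.cos (θ s) * Real.cos (w * t) + Real.sin (θ s) * Real.sin (w * t)) s :=
      (hxd.mul_const _).add (hzd.mul_const _)
    have h2 : HasDerivAt (fun _ : ℝ => t) (0:ℝ) s := hasDerivAt_const _ _
    have h3 : HasDerivAt (fun u => -(x u) * Real.sin (w * t) + z u * Real.cos (w * t))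
        (-(Real.cos (θ s)) * Real.sin (w * t) + Real.sin (θ s) * Real.cos (w * t)) s :=
      ((hxd.neg).mul_const _).add (hzd.mul_const _)
    have : HasDerivAt (fun u => φ u t)
        (Real.cos (θ s) * Real.cos (w * t) + Real.sin (θ s) * Real.sin (w * t), 0,
         -(Real.cos (θ s)) * Real.sin (w * t) + Real.sin (θ s) * Real.cos (w * t)) s := by
      have := h1.prodMk (h2.prodMk h3)
      simpa [hφ] using this
    exact this.deriv
  -- derivative in t
  have hφt : deriv (fun v => φ s v) t =
      (x s * (-Real.sin (w * t) * w) + z s * (Real.cos (w * t) * w), 1,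
       -(x s) * (Real.cos (w * t) * w) + z s * (-Real.sin (w * t) * w)) := by
    have hc : HasDerivAt (fun v : ℝ => Real.cos (w * v)) (-Real.sin (w * t) * w) t := by
      have := (Real.hasDerivAt_cos (w * t)).comp t ((hasDerivAt_id t).const_mul w)
      exact this.congr_deriv (by ring)
    have hsn : HasDerivAt (fun v : ℝ => Real.sin (w * v)) (Real.cos (w * t) * w) t := by
      have := (Real.hasDerivAt_sin (w * t)).comp t ((hasDerivAt_id t).const_mul w)
      exact this.congr_deriv (by ring)
    have h1 : HasDerivAt (fun v => x s * Real.cos (w * v) + z s * Real.sin (w * v))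
        (x s * (-Real.sin (w * t) * w) + z s * (Real.cos (w * t) * w)) t :=
      (hc.const_mul _).add (hsn.const_mul _)
    have h2 : HasDerivAt (fun v : ℝ => v) (1:ℝ) t := hasDerivAt_id t
    have h3 : HasDerivAt (fun v => -(x s) * Real.sin (w * v) + z s * Real.cos (w * v))
        (-(x s) * (Real.cos (w * t) * w) + z s * (-Real.sin (w * t) * w)) t :=
      (hsn.const_mul _).add (hc.const_mul _)
    have : HasDerivAt (fun v => φ s v)
        (x s * (-Real.sin (w * t) * w) + z s * (Real.cos (w * t) * w), 1,
         -(x s) * (Real.cos (w * t) * w) + z s * (-Real.sin (w * t) * w)) t := by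
      have := h1.prodMk (h2.prodMk h3)
      simpa [hφ] using this
    exact this.deriv
  have hpyth := Real.sin_sq_add_cos_sq (w * t - θ s)
  have hpyth2 := Real.sin_sq_add_cos_sq (θ s)
  have hpyth3 := Real.sin_sq_add_cos_sq (w * t)
  have hξ := hξ₁ s
  rw [(htan s).1, (htan s).2] at hξ
  have hinv : (Real.sqrt (1 + w ^ 2 * ξ₁ s ^ 2))⁻¹ ^ 2 * (1 + w ^ 2 * ξ₁ s ^ 2) = 1 := by
    rw [inv_pow, hsq]; exact inv_mul_cancel₀ hA.ne'
  have key : Real.sin (w * t - θ s) * (x s * (-Real.sin (w * t) * w) + z s * (Real.cos (w * t) * w))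
      + (-(w * ξ₁ s)) * 1
      + Real.cos (w * t - θ s) * (-(x s) * (Real.cos (w * t) * w) + z s * (-Real.sin (w * t) * w)) = 0 := by
    rw [Real.sin_sub, Real.cos_sub, hξ]
    linear_combination (-(w * (x s * Real.cos (θ s) + z s * Real.sin (θ s)))) * hpyth3
  refine ⟨?_, ?_, ?_⟩
  · rw [hν]
    simp only [dot3, Prod.smul_def, smul_eq_mul]
    linear_combination ((Real.sqrt (1 + w ^ 2 * ξ₁ s ^ 2))⁻¹ ^ 2) * hpyth + hinv
  · rw [hν, hφs]
    simp only [dot3, Prod.smul_def, smul_eq_mul]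
    rw [Real.sin_sub, Real.cos_sub]
    ring
  · rw [hν, hφt]
    simp only [dot3, Prod.smul_def, smul_eq_mul]
    linear_combination (Real.sqrt (1 + w ^ 2 * ξ₁ s ^ 2))⁻¹ * key
end

section
/- Let w > 0, let α = (x, z) : I → ℝ² be a smooth curve parametrized by arc-length, let θ : I → ℝ be a smooth function with α'(s) = (cos θ(s), sin θ(s)), write TS(α)(s) = (ξ₁(s), ξ₂(s)), let φ(s,t) = (x(s)cos(wt) + z(s)sin(wt), t, −x(s)sin(wt) + z(s)cos(wt)), and let ν(s,t) = (1/√(1 + w²ξ₁(s)²))·(sin(wt − θ(s)), −w·ξ₁(s), cos(wt − θ(s))) be its unit normal. Then the coefficients of the second fundamental form of φ with respect to ν are e = ⟨∂²φ/∂s², ν⟩ = θ'(s)/√(1 + w²ξ₁(s)²), f = ⟨∂²φ/∂s∂t, ν⟩ = −w/√(1 + w²ξ₁(s)²), and g = ⟨∂²φ/∂t², ν⟩ = w²ξ₂(s)/√(1 + w²ξ₁(s)²) at every (s,t). -/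
/-- Second fundamental form of the helicoidal surface
`φ(s,t) = (x(s)cos(wt) + z(s)sin(wt), t, −x(s)sin(wt) + z(s)cos(wt))` generated by an
arc-length parametrized profile curve `α = (x, z)` with angle function `θ` and
TreadmillSled `(ξ₁, ξ₂)`, with respect to the unit normal
`ν(s,t) = (1/√(1 + w²ξ₁²))·(sin(wt − θ), −wξ₁, cos(wt − θ))`:
`e = ⟨φ_ss, ν⟩ = θ'/√(1 + w²ξ₁²)`, `f = ⟨φ_st, ν⟩ = −w/√(1 + w²ξ₁²)`,
`g = ⟨φ_tt, ν⟩ = w²ξ₂/√(1 + w²ξ₁²)`. -/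
theorem stmt19 (w : ℝ) (hw : 0 < w) (x z θ ξ₁ ξ₂ : ℝ → ℝ)
    (φ ν : ℝ → ℝ → ℝ × ℝ × ℝ)
    (hx : ContDiff ℝ (⊤ : ℕ∞) x) (hz : ContDiff ℝ (⊤ : ℕ∞) z) (hθ : ContDiff ℝ (⊤ : ℕ∞) θ)
    (htan : ∀ s, deriv x s = Real.cos (θ s) ∧ deriv z s = Real.sin (θ s))
    (hξ₁ : ∀ s, ξ₁ s = -(deriv x s * x s) - deriv z s * z s)
    (hξ₂ : ∀ s, ξ₂ s = x s * deriv z s - z s * deriv x s)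
    (hφ : ∀ s t, φ s t = (x s * Real.cos (w * t) + z s * Real.sin (w * t), t,
        -(x s) * Real.sin (w * t) + z s * Real.cos (w * t)))
    (hν : ∀ s t, ν s t = (Real.sqrt (1 + w ^ 2 * ξ₁ s ^ 2))⁻¹ •
        ((Real.sin (w * t - θ s), -(w * ξ₁ s), Real.cos (w * t - θ s)) : ℝ × ℝ × ℝ)) :
    ∀ s t : ℝ,
      dot3 (deriv (fun u => deriv (fun u' => φ u' t) u) s) (ν s t)
        = deriv θ s / Real.sqrt (1 + w ^ 2 * ξ₁ s ^ 2) ∧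
      dot3 (deriv (fun u => deriv (fun v => φ u v) t) s) (ν s t)
        = -w / Real.sqrt (1 + w ^ 2 * ξ₁ s ^ 2) ∧
      dot3 (deriv (fun v => deriv (fun v' => φ s v') v) t) (ν s t)
        = w ^ 2 * ξ₂ s / Real.sqrt (1 + w ^ 2 * ξ₁ s ^ 2) := by
  have hx' : ∀ u, HasDerivAt x (Real.cos (θ u)) u := fun u => by
    have h := (hx.differentiable (by simp) u).hasDerivAt
    rwa [(htan u).1] at h
  have hz' : ∀ u, HasDerivAt z (Real.sin (θ u)) u := fun u => by
    have h := (hz.differentiable (by simp) u).hasDerivAt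
    rwa [(htan u).2] at h
  have hθ' : ∀ u, HasDerivAt θ (deriv θ u) u := fun u =>
    (hθ.differentiable (by simp) u).hasDerivAt
  intro s t
  set q : ℝ := Real.sqrt (1 + w ^ 2 * ξ₁ s ^ 2) with hq
  have hqpos : 0 < q := Real.sqrt_pos.mpr (by positivity)
  -- first s-derivative (t fixed)
  have hφs : ∀ (t u : ℝ), HasDerivAt (fun u' => φ u' t)
      (Real.cos (θ u) * Real.cos (w * t) + Real.sin (θ u) * Real.sin (w * t), (0:ℝ),
        -(Real.cos (θ u)) * Real.sin (w * t) + Real.sin (θ u) * Real.cos (w * t)) u := by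
    intro t u
    have h : (fun u' => φ u' t) = fun u' => ((x u' * Real.cos (w * t) + z u' * Real.sin (w * t), t,
        -(x u') * Real.sin (w * t) + z u' * Real.cos (w * t)) : ℝ × ℝ × ℝ) := by
      funext u'; rw [hφ]
    rw [h]
    exact (((hx' u).mul_const _).add ((hz' u).mul_const _)).prodMk
      ((hasDerivAt_const u t).prodMk
        ((((hx' u).neg).mul_const _).add ((hz' u).mul_const _)))
  -- first t-derivative (u fixed)
  have hφt : ∀ (u t : ℝ), HasDerivAt (fun v => φ u v)
      (x u * (-Real.sin (w * t) * w) + z u * (Real.cos (w * t) * w), (1:ℝ),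
        -(x u) * (Real.cos (w * t) * w) + z u * (-Real.sin (w * t) * w)) t := by
    intro u t
    have : (fun v => φ u v) = fun v => ((x u * Real.cos (w * v) + z u * Real.sin (w * v), v,
        -(x u) * Real.sin (w * v) + z u * Real.cos (w * v)) : ℝ × ℝ × ℝ) := by
      funext v; rw [hφ]
    rw [this]
    have hc : HasDerivAt (fun v => Real.cos (w * v)) (-Real.sin (w * t) * w) t :=
      (((hasDerivAt_id t).const_mul w).cos).congr_deriv (by simp only [id_eq]; ring)
    have hs : HasDerivAt (fun v => Real.sin (w * v)) (Real.cos (w * t) * w) t :=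
      (((hasDerivAt_id t).const_mul w).sin).congr_deriv (by simp only [id_eq]; ring)
    exact ((hc.const_mul _).add (hs.const_mul _)).prodMk
      ((hasDerivAt_id t).prodMk ((hs.const_mul _).add (hc.const_mul _)))
  refine ⟨?_, ?_, ?_⟩
  · -- e
    have h1 : (fun u => deriv (fun u' => φ u' t) u) = fun u =>
        ((Real.cos (θ u) * Real.cos (w * t) + Real.sin (θ u) * Real.sin (w * t), (0:ℝ),
          -(Real.cos (θ u)) * Real.sin (w * t) + Real.sin (θ u) * Real.cos (w * t)) : ℝ × ℝ × ℝ) :=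
      funext fun u => (hφs t u).deriv
    rw [h1]
    have h2 : HasDerivAt (fun u =>
        ((Real.cos (θ u) * Real.cos (w * t) + Real.sin (θ u) * Real.sin (w * t), (0:ℝ),
          -(Real.cos (θ u)) * Real.sin (w * t) + Real.sin (θ u) * Real.cos (w * t)) : ℝ × ℝ × ℝ))
        (((-Real.sin (θ s) * deriv θ s) * Real.cos (w * t) + (Real.cos (θ s) * deriv θ s) * Real.sin (w * t), (0:ℝ),
          -((-Real.sin (θ s) * deriv θ s)) * Real.sin (w * t) + (Real.cos (θ s) * deriv θ s) * Real.cos (w * t))) s := by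
      exact ((((hθ' s).cos).mul_const _).add (((hθ' s).sin).mul_const _)).prodMk
        ((hasDerivAt_const s (0:ℝ)).prodMk (((((hθ' s).cos).neg).mul_const _).add (((hθ' s).sin).mul_const _)))
    rw [h2.deriv, hν s t]
    simp only [dot3, Prod.smul_fst, Prod.smul_snd, smul_eq_mul]
    rw [Real.sin_sub, Real.cos_sub, ← hq, div_eq_mul_inv]
    have p1 := Real.sin_sq_add_cos_sq (θ s)
    have p2 := Real.sin_sq_add_cos_sq (w * t)
    linear_combination (deriv θ s * q⁻¹ * (Real.sin (w*t)^2 + Real.cos (w*t)^2)) * p1 +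
      (deriv θ s * q⁻¹) * p2
  · -- f
    have h1 : (fun u => deriv (fun v => φ u v) t) = fun u =>
        ((x u * (-Real.sin (w * t) * w) + z u * (Real.cos (w * t) * w), (1:ℝ),
          -(x u) * (Real.cos (w * t) * w) + z u * (-Real.sin (w * t) * w)) : ℝ × ℝ × ℝ) :=
      funext fun u => (hφt u t).deriv
    rw [h1]
    have h2 : HasDerivAt (fun u =>
        ((x u * (-Real.sin (w * t) * w) + z u * (Real.cos (w * t) * w), (1:ℝ),
          -(x u) * (Real.cos (w * t) * w) + z u * (-Real.sin (w * t) * w)) : ℝ × ℝ × ℝ))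
        ((Real.cos (θ s) * (-Real.sin (w * t) * w) + Real.sin (θ s) * (Real.cos (w * t) * w), (0:ℝ),
          -(Real.cos (θ s)) * (Real.cos (w * t) * w) + Real.sin (θ s) * (-Real.sin (w * t) * w))) s :=
      (((hx' s).mul_const _).add ((hz' s).mul_const _)).prodMk
        ((hasDerivAt_const s (1:ℝ)).prodMk ((((hx' s).neg).mul_const _).add ((hz' s).mul_const _)))
    rw [h2.deriv, hν s t]
    simp only [dot3, Prod.smul_fst, Prod.smul_snd, smul_eq_mul]
    rw [Real.sin_sub, Real.cos_sub, ← hq, div_eq_mul_inv]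
    have p1 := Real.sin_sq_add_cos_sq (θ s)
    have p2 := Real.sin_sq_add_cos_sq (w * t)
    linear_combination (-w * q⁻¹ * (Real.sin (w*t)^2 + Real.cos (w*t)^2)) * p1 +
      (-w * q⁻¹) * p2
  · -- g
    have hc : HasDerivAt (fun v => Real.cos (w * v)) (-Real.sin (w * t) * w) t :=
      (((hasDerivAt_id t).const_mul w).cos).congr_deriv (by simp only [id_eq]; ring)
    have hs : HasDerivAt (fun v => Real.sin (w * v)) (Real.cos (w * t) * w) t :=
      (((hasDerivAt_id t).const_mul w).sin).congr_deriv (by simp only [id_eq]; ring)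
    have h1 : (fun v => deriv (fun v' => φ s v') v) = fun v =>
        ((x s * (-Real.sin (w * v) * w) + z s * (Real.cos (w * v) * w), (1:ℝ),
          -(x s) * (Real.cos (w * v) * w) + z s * (-Real.sin (w * v) * w)) : ℝ × ℝ × ℝ) :=
      funext fun v => (hφt s v).deriv
    rw [h1]
    have h2 : HasDerivAt (fun v =>
        ((x s * (-Real.sin (w * v) * w) + z s * (Real.cos (w * v) * w), (1:ℝ),
          -(x s) * (Real.cos (w * v) * w) + z s * (-Real.sin (w * v) * w)) : ℝ × ℝ × ℝ))
        ((x s * (-(Real.cos (w * t) * w) * w) + z s * ((-Real.sin (w * t) * w) * w), (0:ℝ),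
          -(x s) * ((-Real.sin (w * t) * w) * w) + z s * (-(Real.cos (w * t) * w) * w))) t :=
      ((((hs.neg).mul_const w).const_mul (x s)).add ((hc.mul_const w).const_mul (z s))).prodMk
        ((hasDerivAt_const t (1:ℝ)).prodMk
          (((hc.mul_const w).const_mul (-(x s))).add (((hs.neg).mul_const w).const_mul (z s))))
    rw [h2.deriv, hν s t]
    simp only [dot3, Prod.smul_fst, Prod.smul_snd, smul_eq_mul]
    rw [Real.sin_sub, Real.cos_sub, ← hq, div_eq_mul_inv, hξ₂ s, (htan s).1, (htan s).2]
    have p2 := Real.sin_sq_add_cos_sq (w * t)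
    linear_combination (w^2 * q⁻¹ * (x s * Real.sin (θ s) - z s * Real.cos (θ s))) * p2
end
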